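/- arXiv:math/0210292 — 4 statements merged into one kernel-verified Lean document; each statement's English description precedes it below -/
import Mathlib

section
/- Let w ∈ ℂⁿ and let D be a bounded domain with B(w, r) ⊆ D ⊆ B(w, R), where 0 < r < R. Let Y ∈ ℂⁿ with |Y| = 1 and let s be a real number with 0 < s ≤ r²/(16R). If f_s is a Carathéodory extremal function for the points w + sY and w on D, then Re ⟨∇f_s(w), Y⟩ ≥ 1/(4R). -/
open Set Metric

/-! Testing `f` against the linear competitor `z ↦ ⟪Y, z - w⟫ / R` gives `Re f(w + sY) ≥ s / R`.
On the slice `g(t) = f(w + tY)`, which maps the disc of radius `r` into the unit disc, the Schwarz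
lemma applied to the difference quotient `g(t)/t` moves it by at most `2t/r²` from
`g'(0) = ⟨∇f(w), Y⟩`. Since `2s/r² ≤ 1/(8R)`, this leaves `Re ⟨∇f(w), Y⟩ ≥ 1/R - 1/(8R)`. -/

/-- `f` is a Carathéodory extremal function for the points `z` and `w` on `D`:
a holomorphic map of `D` into the unit disc with `f w = 0`, `f z` real, and `Re (h z)`
maximal among all competitors `h`. -/
def IsCaratheodoryExtremal {n : ℕ} (D : Set (EuclideanSpace ℂ (Fin n)))
    (z w : EuclideanSpace ℂ (Fin n)) (f : EuclideanSpace ℂ (Fin n) → ℂ) : Prop :=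
  DifferentiableOn ℂ f D ∧ MapsTo f D (ball (0 : ℂ) 1) ∧ f w = 0 ∧ (f z).im = 0 ∧
    ∀ h : EuclideanSpace ℂ (Fin n) → ℂ, DifferentiableOn ℂ h D →
      MapsTo h D (ball (0 : ℂ) 1) → h w = 0 → (h z).re ≤ (f z).re

theorem Complex.dist_dslope_deriv_le_of_mapsTo_ball {E : Type*} [NormedAddCommGroup E]
    [NormedSpace ℂ E] [CompleteSpace E] {g : ℂ → E} {c z : ℂ} {R₁ R₂ : ℝ}
    (hd : DifferentiableOn ℂ g (ball c R₁)) (h_maps : MapsTo g (ball c R₁) (closedBall (g c) R₂))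
    (hz : z ∈ ball c R₁) :
    dist (dslope g c z) (deriv g c) ≤ 2 * R₂ / R₁ ^ 2 * dist z c := by
  have hR₁ : 0 < R₁ := pos_of_mem_ball hz
  have hk : DifferentiableOn ℂ (dslope g c) (ball c R₁) :=
    (Complex.differentiableOn_dslope (ball_mem_nhds c hR₁)).2 hd
  have hbound : ∀ u ∈ ball c R₁, ‖dslope g c u‖ ≤ R₂ / R₁ := fun u hu =>
    Complex.norm_dslope_le_div_of_mapsTo_ball hd h_maps hu
  have hk_maps : MapsTo (dslope g c) (ball c R₁) (closedBall (dslope g c c) (2 * R₂ / R₁)) := by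
    intro u hu
    rw [mem_closedBall, dist_eq_norm]
    calc ‖dslope g c u - dslope g c c‖ ≤ ‖dslope g c u‖ + ‖dslope g c c‖ := norm_sub_le _ _
      _ ≤ R₂ / R₁ + R₂ / R₁ := add_le_add (hbound u hu) (hbound c (mem_ball_self hR₁))
      _ = 2 * R₂ / R₁ := by ring
  calc dist (dslope g c z) (deriv g c) = dist (dslope g c z) (dslope g c c) := by
        rw [dslope_same]
    _ ≤ 2 * R₂ / R₁ / R₁ * dist z c := Complex.dist_le_div_mul_dist_of_mapsTo_ball hk hk_maps hz
    _ = 2 * R₂ / R₁ ^ 2 * dist z c := by rw [div_div, sq]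

theorem hasDerivAt_comp_add_smul {E F : Type*} [NormedAddCommGroup E] [NormedSpace ℂ E]
    [NormedAddCommGroup F] [NormedSpace ℂ F] {f : E → F} {w : E} (hf : DifferentiableAt ℂ f w)
    (Y : E) : HasDerivAt (fun t : ℂ => f (w + t • Y)) (fderiv ℂ f w Y) 0 := by
  have hline : HasDerivAt (fun t : ℂ => w + t • Y) Y 0 := by
    simpa using ((hasDerivAt_id (0 : ℂ)).smul_const Y).const_add w
  exact (by simpa using hf.hasFDerivAt : HasFDerivAt f (fderiv ℂ f w) (w + (0 : ℂ) • Y))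
    |>.comp_hasDerivAt 0 hline

theorem IsCaratheodoryExtremal.re_inner_div_le {n : ℕ} {D : Set (EuclideanSpace ℂ (Fin n))}
    {z w Y : EuclideanSpace ℂ (Fin n)} {f : EuclideanSpace ℂ (Fin n) → ℂ} {R : ℝ}
    (hf : IsCaratheodoryExtremal D z w f) (hDR : D ⊆ ball w R) (hY : ‖Y‖ ≤ 1) :
    (inner ℂ Y (z - w)).re / R ≤ (f z).re := by
  obtain ⟨-, -, -, -, hmax⟩ := hf
  set h : EuclideanSpace ℂ (Fin n) → ℂ := fun x => inner ℂ Y (x - w) / R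
  have hd : DifferentiableOn ℂ h D := by
    simp only [h, div_eq_mul_inv]
    exact (((innerSL ℂ Y).differentiable.comp (differentiable_id.sub_const w)).mul_const
      _).differentiableOn
  have h_maps : MapsTo h D (ball 0 1) := by
    intro x hx
    have hxR : ‖x - w‖ < R := by simpa [dist_eq_norm] using hDR hx
    have hR : 0 < R := (norm_nonneg _).trans_lt hxR
    have hinner : ‖inner ℂ Y (x - w)‖ < R :=
      calc ‖inner ℂ Y (x - w)‖ ≤ ‖Y‖ * ‖x - w‖ := norm_inner_le_norm Y (x - w)
        _ ≤ 1 * ‖x - w‖ := by gcongr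
        _ < R := by rwa [one_mul]
    rw [mem_ball_zero_iff, norm_div, Complex.norm_real, Real.norm_of_nonneg hR.le,
      div_lt_one hR]
    exact hinner
  have hw : h w = 0 := by simp [h]
  simpa [h, Complex.div_ofReal_re] using hmax h hd h_maps hw

theorem dist_dslope_line_fderiv_le {E F : Type*} [NormedAddCommGroup E] [NormedSpace ℂ E]
    [NormedAddCommGroup F] [NormedSpace ℂ F] [CompleteSpace F] {f : E → F} {w Y : E} {r M : ℝ}
    (hd : DifferentiableOn ℂ f (ball w r)) (h_maps : MapsTo f (ball w r) (closedBall (f w) M))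
    (hY : ‖Y‖ ≤ 1) {t : ℂ} (ht : ‖t‖ < r) :
    dist (dslope (fun t : ℂ => f (w + t • Y)) 0 t) (fderiv ℂ f w Y) ≤ 2 * M / r ^ 2 * ‖t‖ := by
  have hline : ∀ u ∈ ball (0 : ℂ) r, w + u • Y ∈ ball w r := fun u hu => by
    rw [mem_ball_zero_iff] at hu
    rw [mem_ball_iff_norm, add_sub_cancel_left, norm_smul]
    exact (mul_le_of_le_one_right (norm_nonneg u) hY).trans_lt hu
  have hr : 0 < r := (norm_nonneg t).trans_lt ht
  have hgd : DifferentiableOn ℂ (fun u : ℂ => f (w + u • Y)) (ball 0 r) := fun u hu =>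
    ((hd.differentiableAt (isOpen_ball.mem_nhds (hline u hu))).comp u
      ((differentiableAt_id.smul_const Y).const_add w)).differentiableWithinAt
  have hg_maps : MapsTo (fun u : ℂ => f (w + u • Y)) (ball 0 r)
      (closedBall (f (w + (0 : ℂ) • Y)) M) := by
    rw [zero_smul, add_zero]
    exact h_maps.comp hline
  have hderiv := hasDerivAt_comp_add_smul (hd.differentiableAt (ball_mem_nhds w hr)) Y
  simpa [hderiv.deriv] using
    Complex.dist_dslope_deriv_le_of_mapsTo_ball hgd hg_maps (mem_ball_zero_iff.2 ht)

theorem stmt1_general {n : ℕ} (w : EuclideanSpace ℂ (Fin n)) (r R : ℝ) (hr : 0 < r) (hrR : r < R)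
    (D : Set (EuclideanSpace ℂ (Fin n)))
    (hrD : ball w r ⊆ D) (hDR : D ⊆ ball w R)
    (Y : EuclideanSpace ℂ (Fin n)) (hY : ‖Y‖ = 1)
    (s : ℝ) (hs : 0 < s) (hs' : s ≤ r ^ 2 / (16 * R))
    (f : EuclideanSpace ℂ (Fin n) → ℂ)
    (hf : IsCaratheodoryExtremal D (w + (s : ℂ) • Y) w f) :
    1 / (4 * R) ≤ (fderiv ℂ f w Y).re := by
  have hR : 0 < R := hr.trans hrR
  have hsr : s < r := hs'.trans_lt <| by
    rw [div_lt_iff₀ (by positivity)]; nlinarith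
  have hquot : 1 / R ≤ (f (w + (s : ℂ) • Y)).re / s := by
    have hinner : inner ℂ Y ((s : ℂ) • Y) = s := by
      rw [inner_smul_right, inner_self_eq_norm_sq_to_K, hY]; norm_num
    have h := hf.re_inner_div_le hDR hY.le
    rw [add_sub_cancel_left, hinner, Complex.ofReal_re] at h
    rwa [le_div_iff₀ hs, one_div_mul_eq_div]
  obtain ⟨hfd, hf_maps, hfw, -, -⟩ := hf
  have hslice : dist (f (w + (s : ℂ) • Y) / s) (fderiv ℂ f w Y) ≤ 2 / r ^ 2 * s := by
    have h := dist_dslope_line_fderiv_le (hfd.mono hrD)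
      (fun x hx => by simpa [hfw] using ball_subset_closedBall (hf_maps (hrD hx))) hY.le
      (t := s) (by simpa [abs_of_pos hs] using hsr)
    simpa [dslope_of_ne _ (Complex.ofReal_ne_zero.2 hs.ne'), slope_def_field, hfw,
      abs_of_pos hs] using h
  have hre : (f (w + (s : ℂ) • Y)).re / s - (fderiv ℂ f w Y).re ≤ 2 / r ^ 2 * s := by
    rw [← Complex.div_ofReal_re, ← Complex.sub_re]
    exact (Complex.re_le_norm _).trans ((dist_eq_norm _ _).symm.trans_le hslice)
  have hsmall : 2 / r ^ 2 * s ≤ 1 / (8 * R) :=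
    calc 2 / r ^ 2 * s ≤ 2 / r ^ 2 * (r ^ 2 / (16 * R)) := by gcongr
      _ = 1 / (8 * R) := by field_simp; ring
  have hsplit : 1 / (4 * R) + 1 / (8 * R) ≤ 1 / R := by field_simp; norm_num
  linarith

/-- If `B(w,r) ⊆ D ⊆ B(w,R)`, `|Y| = 1`, `0 < s ≤ r²/(16R)`, and `f`
is a Carathéodory extremal function for `w + sY` and `w` on `D`, then
`Re ⟨∇f(w), Y⟩ ≥ 1/(4R)`.  (For holomorphic `f` the pairing `⟨∇f(w), Y⟩` is the
complex Fréchet derivative of `f` at `w` applied to `Y`.) -/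
theorem stmt1 {n : ℕ} (w : EuclideanSpace ℂ (Fin n)) (r R : ℝ) (hr : 0 < r) (hrR : r < R)
    (D : Set (EuclideanSpace ℂ (Fin n))) (hDopen : IsOpen D) (hDconn : IsConnected D)
    (hrD : ball w r ⊆ D) (hDR : D ⊆ ball w R)
    (Y : EuclideanSpace ℂ (Fin n)) (hY : ‖Y‖ = 1)
    (s : ℝ) (hs : 0 < s) (hs' : s ≤ r ^ 2 / (16 * R))
    (f : EuclideanSpace ℂ (Fin n) → ℂ)
    (hf : IsCaratheodoryExtremal D (w + (s : ℂ) • Y) w f) :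
    1 / (4 * R) ≤ (fderiv ℂ f w Y).re :=
  stmt1_general w r R hr hrR D hrD hDR Y hY s hs hs' f hf
end

section
/- Let R > 2r > 2s > 0, let K be a connected compact subset of ℂⁿ containing 0, and let D be a domain in ℂⁿ such that B(0, 2r) ⊆ D ⊆ B(0, R) and such that the closed 3s-neighborhood of K is contained in D. Then there exists a positive constant C = C(K, R, s) such that ‖X‖_K ≤ C · ‖X‖_{B(0, r)} for every holomorphic vector field X on D generated by a one-parameter group action on D. -/
/-!
By Cauchy's estimate on complex lines, `‖X‖` grows by at most the factor `R / s` along orbits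
starting near `0`, so up to time `τ` the flow moves the points of `B(0, s/16)` by
`O(τ ‖X‖_{B(0,r)})`. The displacement `g_τ - id` is holomorphic and bounded by `2R` on `D`;
a two-disc estimate for its Taylor coefficients (`|f| ≤ ε` on the small disc, `≤ B` on the large
one give `|f| ≤ 2√(εB)` in between) propagates this smallness, with the exponent halving at each
step, along chains of discs joining `0` to every point of the `s/2`-neighbourhood of `K`. By
compactness and connectedness of `K` these chains have bounded length, which is where the constant
depends on `K`. On the other hand, for times up to `s / (2 ‖X ζ‖)`, Cauchy's estimate for the
displacement keeps `X` nearly constant along the orbit of `ζ ∈ K`, so that orbit travels a distance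
of order `s`. Comparing the two bounds on the displacement at `ζ` bounds `‖X ζ‖`.
-/

open Set Metric

/-- A one-parameter group action on a domain `D ⊆ ℂⁿ`: a continuous map
`g : D × ℝ → D` such that each `g(·,t)` is a holomorphic automorphism of `D`
(its inverse `g(·,-t)` is again of this form, hence holomorphic), `g(z,0) = z`,
and `g(z,t+s) = g(g(z,t),s)`. -/
structure OneParamGroup (n : ℕ) (D : Set (EuclideanSpace ℂ (Fin n))) where
  toFun : EuclideanSpace ℂ (Fin n) → ℝ → EuclideanSpace ℂ (Fin n)
  cont : ContinuousOn (fun p : EuclideanSpace ℂ (Fin n) × ℝ => toFun p.1 p.2) (D ×ˢ univ)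
  mapsTo : ∀ t : ℝ, MapsTo (toFun · t) D D
  holo : ∀ t : ℝ, DifferentiableOn ℂ (toFun · t) D
  bijOn : ∀ t : ℝ, BijOn (toFun · t) D D
  map_zero : ∀ z ∈ D, toFun z 0 = z
  map_add : ∀ z ∈ D, ∀ t s : ℝ, toFun z (t + s) = toFun (toFun z t) s

/-- `X` is the holomorphic vector field generated by the one-parameter group action `A`:
`X(z) = ∂g/∂t(z,0)`, holomorphic on `D`. -/
def Generates {n : ℕ} {D : Set (EuclideanSpace ℂ (Fin n))} (A : OneParamGroup n D)
    (X : EuclideanSpace ℂ (Fin n) → EuclideanSpace ℂ (Fin n)) : Prop :=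
  DifferentiableOn ℂ X D ∧ ∀ z ∈ D, HasDerivAt (fun t => A.toFun z t) (X z) 0

/-- `‖X‖_K = sup_{z ∈ K} |X(z)|`. -/
noncomputable def supNormOn {n : ℕ}
    (X : EuclideanSpace ℂ (Fin n) → EuclideanSpace ℂ (Fin n))
    (K : Set (EuclideanSpace ℂ (Fin n))) : ℝ :=
  ⨆ z ∈ K, ‖X z‖

section CauchyEstimates

variable {E F : Type*} [NormedAddCommGroup E] [NormedSpace ℂ E]
  [NormedAddCommGroup F] [NormedSpace ℂ F]

theorem add_smul_mem_closedBall {z v : E} {w : ℂ} {r : ℝ} (hw : w ∈ closedBall (0 : ℂ) r) :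
    z + w • v ∈ closedBall z (r * ‖v‖) := by
  rw [mem_closedBall_zero_iff] at hw
  rw [mem_closedBall, dist_eq_norm, add_sub_cancel_left, norm_smul]
  exact mul_le_mul_of_nonneg_right hw (norm_nonneg v)

theorem mapsTo_add_smul_closedBall {z v : E} (hv : v ≠ 0) (r : ℝ) :
    MapsTo (fun w : ℂ => z + w • v) (closedBall 0 (r / ‖v‖)) (closedBall z r) := fun _ hw => by
  simpa only [div_mul_cancel₀ _ (norm_ne_zero_iff.2 hv)] using
    add_smul_mem_closedBall (z := z) (v := v) hw

theorem norm_fderiv_apply_le_of_forall_mem_closedBall_norm_le {f : E → F} {z : E} {ρ M : ℝ}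
    (hρ : 0 < ρ) (hf : DifferentiableOn ℂ f (closedBall z ρ))
    (hM : ∀ y ∈ closedBall z ρ, ‖f y‖ ≤ M) (v : E) : ‖fderiv ℂ f z v‖ ≤ M * ‖v‖ / ρ := by
  rcases eq_or_ne v 0 with rfl | hv
  · simp
  have hv' : 0 < ‖v‖ := norm_pos_iff.2 hv
  have hline := mapsTo_add_smul_closedBall (z := z) hv ρ
  have hg : DifferentiableOn ℂ (fun w : ℂ => f (z + w • v)) (closedBall 0 (ρ / ‖v‖)) :=
    hf.comp (by fun_prop) hline
  have hderiv : HasDerivAt (fun w : ℂ => f (z + w • v)) (fderiv ℂ f z v) 0 := by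
    have hline' : HasDerivAt (fun w : ℂ => z + w • v) v 0 := by
      simpa using ((hasDerivAt_id (0 : ℂ)).smul_const v).const_add z
    have hfz : HasFDerivAt f (fderiv ℂ f z) (z + (0 : ℂ) • v) := by
      rw [zero_smul, add_zero]
      exact (hf.differentiableAt (closedBall_mem_nhds z hρ)).hasFDerivAt
    exact hfz.comp_hasDerivAt 0 hline'
  have hcauchy := Complex.norm_deriv_le_of_forall_mem_sphere_norm_le (div_pos hρ hv')
    (hg.diffContOnCl_ball subset_rfl) fun w hw => hM _ (hline (sphere_subset_closedBall hw))
  rw [hderiv.deriv] at hcauchy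
  calc ‖fderiv ℂ f z v‖ ≤ M / (ρ / ‖v‖) := hcauchy
    _ = M * ‖v‖ / ρ := by field_simp

variable [CompleteSpace F]

/-- The `k`-th Taylor coefficient of `g` at `0` is at most both `B / r₂ ^ k` and `ε / r₁ ^ k`,
hence at most `√(ε B) / √(r₁ r₂) ^ k`, so the Taylor series at `w` is dominated by
`√(ε B) / 2 ^ k`. -/
theorem Complex.norm_le_two_mul_sqrt_of_closedBall {g : ℂ → F} {w : ℂ} {r₁ r₂ ε B : ℝ}
    (hr₁ : 0 < r₁) (hr : r₁ ≤ r₂) (hg : DifferentiableOn ℂ g (closedBall 0 r₂))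
    (hB : ∀ z ∈ closedBall 0 r₂, ‖g z‖ ≤ B) (hε : ∀ z ∈ closedBall 0 r₁, ‖g z‖ ≤ ε)
    (hw : 4 * ‖w‖ ^ 2 ≤ r₁ * r₂) : ‖g w‖ ≤ 2 * √(ε * B) := by
  have hr₂ : 0 < r₂ := hr₁.trans_le hr
  have hε0 : 0 ≤ ε := (norm_nonneg _).trans (hε 0 (mem_closedBall_self hr₁.le))
  have hB0 : 0 ≤ B := (norm_nonneg _).trans (hB 0 (mem_closedBall_self hr₂.le))
  have hcoeff : ∀ {r C : ℝ}, 0 < r → r ≤ r₂ → (∀ z ∈ closedBall 0 r, ‖g z‖ ≤ C) → ∀ k : ℕ,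
      ‖iteratedDeriv k g 0‖ / k.factorial ≤ C / r ^ k := by
    intro r C hr hrr hC k
    have := Complex.norm_iteratedDeriv_le_of_forall_mem_sphere_norm_le k hr
      ((hg.mono (closedBall_subset_closedBall hrr)).diffContOnCl_ball subset_rfl)
      fun z hz => hC z (sphere_subset_closedBall hz)
    rw [div_le_iff₀ (by positivity)]
    exact this.trans_eq (by ring)
  have hratio : ‖w‖ ^ 2 / (r₁ * r₂) ≤ 1 / 4 := by
    rw [div_le_iff₀ (by positivity)]
    linarith
  have hterm : ∀ k : ℕ, ‖(k.factorial : ℂ)⁻¹ • (w - 0) ^ k • iteratedDeriv k g 0‖ ≤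
      √(ε * B) * (1 / 2) ^ k := by
    intro k
    set c := ‖iteratedDeriv k g 0‖ / k.factorial
    have hc : 0 ≤ c := by positivity
    have hnorm : ‖(k.factorial : ℂ)⁻¹ • (w - 0) ^ k • iteratedDeriv k g 0‖ = ‖w‖ ^ k * c := by
      simp only [sub_zero, norm_smul, norm_inv, norm_pow, Complex.norm_natCast, c]
      ring
    have hsq : (‖w‖ ^ k * c) ^ 2 ≤ (√(ε * B) * (1 / 2) ^ k) ^ 2 := calc
      (‖w‖ ^ k * c) ^ 2 = (‖w‖ ^ 2) ^ k * (c * c) := by ring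
      _ ≤ (‖w‖ ^ 2) ^ k * (ε / r₁ ^ k * (B / r₂ ^ k)) := by
          gcongr
          · exact hcoeff hr₁ hr hε k
          · exact hcoeff hr₂ le_rfl hB k
      _ = ε * B * (‖w‖ ^ 2 / (r₁ * r₂)) ^ k := by
          rw [div_pow, mul_pow]
          field_simp
      _ ≤ ε * B * (1 / 4) ^ k :=
          mul_le_mul_of_nonneg_left (pow_le_pow_left₀ (by positivity) hratio k) (by positivity)
      _ = (√(ε * B) * (1 / 2) ^ k) ^ 2 := by
          rw [mul_pow, Real.sq_sqrt (by positivity), ← pow_mul, mul_comm k, pow_mul]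
          norm_num
    rw [hnorm]
    exact (pow_le_pow_iff_left₀ (by positivity) (by positivity) two_ne_zero).1 hsq
  have hwball : w ∈ ball (0 : ℂ) r₂ := by
    rw [mem_ball_zero_iff]
    nlinarith [norm_nonneg w]
  have := (Complex.hasSum_taylorSeries_on_ball (hg.mono ball_subset_closedBall)
    hwball).norm_le_of_bounded (hasSum_geometric_two.mul_left √(ε * B)) hterm
  linarith

theorem norm_le_two_mul_sqrt_of_closedBall {f : E → F} {p x : E} {r₁ r₂ ε B : ℝ}
    (hr₁ : 0 < r₁) (hr : r₁ ≤ r₂) (hf : DifferentiableOn ℂ f (closedBall p r₂))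
    (hB : ∀ z ∈ closedBall p r₂, ‖f z‖ ≤ B) (hε : ∀ z ∈ closedBall p r₁, ‖f z‖ ≤ ε)
    (hx : 4 * dist x p ^ 2 ≤ r₁ * r₂) : ‖f x‖ ≤ 2 * √(ε * B) := by
  rcases eq_or_ne (x - p) 0 with hxp | hxp
  · obtain rfl := sub_eq_zero.1 hxp
    have h₁ := hε x (mem_closedBall_self hr₁.le)
    have h₂ := hB x (mem_closedBall_self (hr₁.le.trans hr))
    calc ‖f x‖ = √(‖f x‖ * ‖f x‖) := (Real.sqrt_mul_self (norm_nonneg _)).symm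
      _ ≤ √(ε * B) :=
        Real.sqrt_le_sqrt (mul_le_mul h₁ h₂ (norm_nonneg _) ((norm_nonneg _).trans h₁))
      _ ≤ 2 * √(ε * B) := by linarith [Real.sqrt_nonneg (ε * B)]
  have hd : 0 < ‖x - p‖ := norm_pos_iff.2 hxp
  have hline := mapsTo_add_smul_closedBall (z := p) hxp
  have := Complex.norm_le_two_mul_sqrt_of_closedBall (g := fun w : ℂ => f (p + w • (x - p)))
    (w := 1) (div_pos hr₁ hd) (by gcongr) (hf.comp (by fun_prop) (hline r₂))
    (fun z hz => hB _ (hline r₂ hz)) (fun z hz => hε _ (hline r₁ hz)) ?_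
  · simpa using this
  rw [dist_eq_norm] at hx
  rw [norm_one, div_mul_div_comm, le_div_iff₀ (by positivity)]
  linarith

end CauchyEstimates

section Chains

variable {α : Type*} [PseudoMetricSpace α] {T : Set α} {ε : ℝ} {x₀ : α}

def chainReach (T : Set α) (ε : ℝ) (x₀ : α) : ℕ → Set α
  | 0 => {x₀}
  | k + 1 => T ∩ ⋃ x ∈ chainReach T ε x₀ k, closedBall x ε

theorem chainReach_subset (hx₀ : x₀ ∈ T) : ∀ k, chainReach T ε x₀ k ⊆ T
  | 0 => singleton_subset_iff.2 hx₀
  | _ + 1 => inter_subset_left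

theorem chainReach_mono (hx₀ : x₀ ∈ T) (hε : 0 ≤ ε) : Monotone (chainReach T ε x₀) :=
  monotone_nat_of_le_succ fun k _ hx =>
    ⟨chainReach_subset hx₀ k hx, mem_biUnion hx (mem_closedBall_self hε)⟩

theorem exists_subset_chainReach (hT : IsCompact T) (hTc : IsPreconnected T) (hx₀ : x₀ ∈ T)
    (hε : 0 < ε) : ∃ N, T ⊆ chainReach T ε x₀ N := by
  set V : ℕ → Set α := fun k => ⋃ x ∈ chainReach T ε x₀ k, ball x (ε / 2)
  have hV : ∀ {k y}, y ∈ T → y ∈ V k → y ∈ chainReach T ε x₀ (k + 1) := fun hyT hyV => by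
    obtain ⟨x, hx, hxy⟩ := mem_iUnion₂.1 hyV
    exact ⟨hyT, mem_biUnion hx
      (closedBall_subset_closedBall (by linarith) (ball_subset_closedBall hxy))⟩
  have hVmono : Monotone V := fun k l hkl =>
    biUnion_subset_biUnion_left (chainReach_mono hx₀ hε.le hkl)
  have hcover : T ⊆ ⋃ k, V k := by
    refine hTc.subset_of_closure_inter_subset
      (isOpen_iUnion fun k => isOpen_biUnion fun _ _ => isOpen_ball)
      ⟨x₀, hx₀, mem_iUnion.2 ⟨0, mem_biUnion rfl (mem_ball_self (half_pos hε))⟩⟩ ?_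
    rintro y ⟨hy, hyT⟩
    obtain ⟨b, hb, hyb⟩ := Metric.mem_closure_iff.1 hy (ε / 2) (half_pos hε)
    obtain ⟨k, hbk⟩ := mem_iUnion.1 hb
    obtain ⟨x, hx, hbx⟩ := mem_iUnion₂.1 hbk
    refine mem_iUnion.2 ⟨k + 1, mem_biUnion ⟨hyT, mem_biUnion hx ?_⟩ (mem_ball_self (half_pos hε))⟩
    rw [mem_closedBall]
    linarith [dist_triangle y b x, mem_ball.1 hbx]
  obtain ⟨N, hN⟩ := hT.elim_directed_cover V (fun k => isOpen_biUnion fun _ _ => isOpen_ball) hcover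
    hVmono.directed_le
  exact ⟨N + 1, fun y hy => hV hy (hN hy)⟩

end Chains

theorem norm_le_of_mem_chainReach {E F : Type*} [NormedAddCommGroup E] [NormedSpace ℂ E]
    [NormedAddCommGroup F] [NormedSpace ℂ F] [CompleteSpace F] {f : E → F} {U T : Set E}
    {x₀ : E} {ρ B ε : ℝ} (hρ : 0 < ρ) (hB : 0 < B) (hf : DifferentiableOn ℂ f U)
    (hfB : ∀ z ∈ U, ‖f z‖ ≤ B) (hTU : ∀ y ∈ T, closedBall y (8 * ρ) ⊆ U) (hx₀ : x₀ ∈ T)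
    (hε : ∀ z ∈ closedBall x₀ ρ, ‖f z‖ ≤ ε) (k : ℕ) :
    ∀ y ∈ chainReach T (ρ / 4) x₀ k, ∀ z ∈ closedBall y ρ,
      ‖f z‖ ≤ 4 * B * (ε / (4 * B)) ^ ((1 / 2 : ℝ) ^ k) := by
  have hδ : 0 ≤ ε / (4 * B) :=
    div_nonneg ((norm_nonneg _).trans (hε x₀ (mem_closedBall_self hρ.le))) (by positivity)
  induction k with
  | zero =>
    rintro y rfl z hz
    rw [pow_zero, Real.rpow_one, mul_div_cancel₀ _ (by positivity)]
    exact hε z hz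
  | succ k ih =>
    rintro y' ⟨-, hy'⟩ z hz
    obtain ⟨y, hy, hyy'⟩ := mem_iUnion₂.1 hy'
    have hyU := hTU y (chainReach_subset hx₀ k hy)
    have hzy : 4 * dist z y ^ 2 ≤ ρ * (8 * ρ) := by
      have := dist_triangle z y' y
      nlinarith [mem_closedBall.1 hz, mem_closedBall.1 hyy', dist_nonneg (x := z) (y := y)]
    refine (norm_le_two_mul_sqrt_of_closedBall hρ (by linarith) (hf.mono hyU)
      (fun w hw => hfB w (hyU hw)) (ih y hy) hzy).trans_eq ?_
    have hhalf : (ε / (4 * B)) ^ ((1 / 2 : ℝ) ^ k) =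
        ((ε / (4 * B)) ^ ((1 / 2 : ℝ) ^ (k + 1))) ^ 2 := by
      rw [← Real.rpow_mul_natCast hδ, pow_succ]
      norm_num [mul_assoc]
    rw [hhalf, show 4 * B * ((ε / (4 * B)) ^ ((1 / 2 : ℝ) ^ (k + 1))) ^ 2 * B =
      (2 * B * (ε / (4 * B)) ^ ((1 / 2 : ℝ) ^ (k + 1))) ^ 2 by ring, Real.sqrt_sq (by positivity)]
    ring

section Flows

variable {n : ℕ} {D : Set (EuclideanSpace ℂ (Fin n))} {R : ℝ}

theorem OneParamGroup.norm_sub_le_of_chainReach (A : OneParamGroup n D)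
    {T : Set (EuclideanSpace ℂ (Fin n))} {x₀ y : EuclideanSpace ℂ (Fin n)} {ρ ε σ : ℝ} {N : ℕ}
    (hρ : 0 < ρ) (hDR : D ⊆ ball 0 R) (hTD : ∀ y ∈ T, closedBall y (8 * ρ) ⊆ D) (hx₀ : x₀ ∈ T)
    (hN : T ⊆ chainReach T (ρ / 4) x₀ N) (hε : ∀ z ∈ closedBall x₀ ρ, ‖A.toFun z σ - z‖ ≤ ε)
    (hy : y ∈ T) : ‖A.toFun y σ - y‖ ≤ 8 * R * (ε / (8 * R)) ^ ((1 / 2 : ℝ) ^ N) := by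
  have hnorm : ∀ z ∈ D, ‖z‖ < R := fun z hz => mem_ball_zero_iff.1 (hDR hz)
  have hR : 0 < R :=
    (norm_nonneg _).trans_lt (hnorm x₀ (hTD x₀ hx₀ (mem_closedBall_self (by positivity))))
  have hB : ∀ z ∈ D, ‖A.toFun z σ - z‖ ≤ 2 * R := fun z hz => by
    linarith [norm_sub_le (A.toFun z σ) z, hnorm _ (A.mapsTo σ hz), hnorm z hz]
  have := norm_le_of_mem_chainReach (f := fun z => A.toFun z σ - z) hρ (by positivity)
    ((A.holo σ).sub differentiableOn_id) hB hTD hx₀ hε N y (hN hy) y (mem_closedBall_self hρ.le)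
  rwa [show 4 * (2 * R) = 8 * R by ring] at this

namespace Generates

variable {A : OneParamGroup n D} {X : EuclideanSpace ℂ (Fin n) → EuclideanSpace ℂ (Fin n)}
  {z : EuclideanSpace ℂ (Fin n)}

theorem hasDerivAt_flow (hX : Generates A X) (hz : z ∈ D) (t : ℝ) :
    HasDerivAt (A.toFun z) (X (A.toFun z t)) t := by
  have h : HasDerivAt (fun τ => A.toFun (A.toFun z t) (τ - t)) (X (A.toFun z t)) t :=
    HasDerivAt.comp_sub_const t t (by simpa using hX.2 _ (A.mapsTo t hz))
  convert h using 1
  funext τ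
  rw [← A.map_add z hz, add_sub_cancel]

/-- Differentiate `g(g(z, δ), σ) = g(g(z, σ), δ)` at `δ = 0`. -/
theorem fderiv_flow_apply (hX : Generates A X) (hD : IsOpen D) (hz : z ∈ D) (σ : ℝ) :
    fderiv ℂ (A.toFun · σ) z (X z) = X (A.toFun z σ) := by
  have hfz : HasFDerivAt (A.toFun · σ) ((fderiv ℂ (A.toFun · σ) z).restrictScalars ℝ)
      (A.toFun z 0) := by
    rw [A.map_zero z hz]
    exact ((A.holo σ).differentiableAt (hD.mem_nhds hz)).hasFDerivAt.restrictScalars ℝ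
  have hcomm : (fun δ : ℝ => A.toFun (A.toFun z δ) σ) = A.toFun (A.toFun z σ) := by
    funext δ
    rw [← A.map_add z hz, ← A.map_add z hz, add_comm]
  have h := hfz.comp_hasDerivAt (0 : ℝ) (hX.2 z hz)
  rw [Function.comp_def, hcomm] at h
  exact h.unique (hX.2 _ (A.mapsTo σ hz))

theorem norm_apply_flow_le (hX : Generates A X) (hD : IsOpen D) (hDR : D ⊆ ball 0 R) {s : ℝ}
    (hs : 0 < s) (hz : closedBall z s ⊆ D) (σ : ℝ) :
    ‖X (A.toFun z σ)‖ ≤ R * ‖X z‖ / s := by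
  rw [← hX.fderiv_flow_apply hD (hz (mem_closedBall_self hs.le)) σ]
  exact norm_fderiv_apply_le_of_forall_mem_closedBall_norm_le hs ((A.holo σ).mono hz)
    (fun y hy => (mem_ball_zero_iff.1 (hDR (A.mapsTo σ (hz hy)))).le) _

theorem norm_flow_sub_le (hX : Generates A X) (hD : IsOpen D) (hDR : D ⊆ ball 0 R) {s σ : ℝ}
    (hs : 0 < s) (hz : closedBall z s ⊆ D) (hσ : 0 ≤ σ) :
    ‖A.toFun z σ - z‖ ≤ R * ‖X z‖ / s * σ := by
  have hzD := hz (mem_closedBall_self hs.le)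
  have := norm_image_sub_le_of_norm_deriv_le_segment' (a := 0) (b := σ)
    (fun τ _ => (hX.hasDerivAt_flow hzD τ).hasDerivWithinAt)
    (fun τ _ => hX.norm_apply_flow_le hD hDR hs hz τ) σ ⟨hσ, le_rfl⟩
  rwa [A.map_zero z hzD, sub_zero] at this

/-- Cauchy's estimate for the displacement `g_τ - id` shows that `X` changes by at most
`Ψ ‖X ζ‖ / ρ` along the orbit of `ζ`, so the orbit stays close to the line `τ ↦ ζ + τ X ζ`. -/
theorem mul_norm_le_of_norm_flow_sub_le (hX : Generates A X) (hD : IsOpen D)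
    {ζ : EuclideanSpace ℂ (Fin n)} {ρ t Ψ : ℝ} (hρ : 0 < ρ) (hζ : closedBall ζ ρ ⊆ D) (ht : 0 ≤ t)
    (hΨ : ∀ τ ∈ Icc 0 t, ∀ y ∈ closedBall ζ ρ, ‖A.toFun y τ - y‖ ≤ Ψ) :
    t * ‖X ζ‖ ≤ Ψ + Ψ * ‖X ζ‖ / ρ * t := by
  have hζD := hζ (mem_closedBall_self hρ.le)
  have hvar : ∀ τ ∈ Icc 0 t, ‖X (A.toFun ζ τ) - X ζ‖ ≤ Ψ * ‖X ζ‖ / ρ := by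
    intro τ hτ
    have hdiff := (A.holo τ).differentiableAt (hD.mem_nhds hζD)
    have hG : fderiv ℂ (fun w => A.toFun w τ - w) ζ (X ζ) = X (A.toFun ζ τ) - X ζ := by
      rw [fderiv_fun_sub hdiff differentiableAt_fun_id]
      simp [hX.fderiv_flow_apply hD hζD τ]
    rw [← hG]
    exact norm_fderiv_apply_le_of_forall_mem_closedBall_norm_le hρ
      (((A.holo τ).sub differentiableOn_id).mono hζ) (hΨ τ hτ) _
  have hline := norm_image_sub_le_of_norm_deriv_le_segment' (f := fun τ => A.toFun ζ τ - τ • X ζ)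
    (a := 0) (b := t)
    (fun τ _ => by
      have h := (hX.hasDerivAt_flow hζD τ).sub ((hasDerivAt_id τ).smul_const (X ζ))
      rw [one_smul] at h
      exact h.hasDerivWithinAt)
    (fun τ hτ => hvar τ (Ico_subset_Icc_self hτ)) t ⟨ht, le_rfl⟩
  rw [A.map_zero ζ hζD, zero_smul, sub_zero, sub_zero] at hline
  calc t * ‖X ζ‖ = ‖t • X ζ‖ := by rw [norm_smul, Real.norm_of_nonneg ht]
    _ ≤ ‖A.toFun ζ t - ζ‖ + ‖A.toFun ζ t - t • X ζ - ζ‖ := by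
        have := norm_sub_le (A.toFun ζ t - ζ) (A.toFun ζ t - t • X ζ - ζ)
        rwa [show A.toFun ζ t - ζ - (A.toFun ζ t - t • X ζ - ζ) = t • X ζ by abel] at this
    _ ≤ Ψ + Ψ * ‖X ζ‖ / ρ * t :=
        add_le_add (hΨ t ⟨ht, le_rfl⟩ ζ (mem_closedBall_self hρ.le)) hline

theorem norm_le_of_chainReach (hX : Generates A X) (hD : IsOpen D) (hDR : D ⊆ ball 0 R)
    {T : Set (EuclideanSpace ℂ (Fin n))} {ζ : EuclideanSpace ℂ (Fin n)} {s m : ℝ} {N : ℕ}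
    (hs : 0 < s) (hT0 : 0 ∈ T) (hTD : ∀ y ∈ T, closedBall y (s / 2) ⊆ D)
    (hN : T ⊆ chainReach T (s / 64) 0 N)
    (h0 : ∀ z ∈ closedBall 0 (s / 16), closedBall z s ⊆ D ∧ ‖X z‖ ≤ m)
    (hζ : closedBall ζ (s / 2) ⊆ T) :
    ‖X ζ‖ ≤ (16 * (s / (32 * R)) ^ 2 ^ N)⁻¹ * m := by
  have hm : 0 ≤ m := (norm_nonneg _).trans (h0 0 (mem_closedBall_self (by positivity))).2
  have hR : 0 < R := by
    simpa using hDR (hTD 0 hT0 (mem_closedBall_self (by positivity)))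
  rcases (norm_nonneg (X ζ)).eq_or_lt with hq | hq
  · rw [← hq]
    positivity
  set q := ‖X ζ‖ with hqdef
  set β : ℝ := (1 / 2) ^ N
  set Ψ := 8 * R * (m / (16 * q)) ^ β
  have hΨ : ∀ τ ∈ Icc 0 (s / (2 * q)), ∀ y ∈ closedBall ζ (s / 2), ‖A.toFun y τ - y‖ ≤ Ψ := by
    rintro τ ⟨hτ0, hτ⟩ y hy
    have hsmall : ∀ z ∈ closedBall 0 (s / 16), ‖A.toFun z τ - z‖ ≤ R * m / s * τ := fun z hz =>
      (hX.norm_flow_sub_le hD hDR hs (h0 z hz).1 hτ0).trans (by gcongr; exact (h0 z hz).2)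
    refine (A.norm_sub_le_of_chainReach (ρ := s / 16) (by positivity) hDR
      (fun y hy => by rw [show 8 * (s / 16) = s / 2 by ring]; exact hTD y hy) hT0
      (by rwa [show s / 16 / 4 = s / 64 by ring]) hsmall (hζ hy)).trans ?_
    refine mul_le_mul_of_nonneg_left (Real.rpow_le_rpow (by positivity) ?_ (by positivity))
      (by positivity)
    calc R * m / s * τ / (8 * R) = m * τ / (8 * s) := by field_simp
      _ ≤ m * (s / (2 * q)) / (8 * s) := by gcongr
      _ = m / (16 * q) := by field_simp; ring
  have hmain := hX.mul_norm_le_of_norm_flow_sub_le hD (half_pos hs)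
    (hTD ζ (hζ (mem_closedBall_self (by positivity)))) (by positivity) hΨ
  rw [← hqdef] at hmain
  have hΨlow : s / (32 * R) ≤ (m / (16 * q)) ^ β := by
    rw [show s / (2 * q) * q = s / 2 by field_simp,
      show Ψ * q / (s / 2) * (s / (2 * q)) = Ψ by field_simp] at hmain
    rw [div_le_iff₀ (by positivity)]
    linarith
  have hpow : (s / (32 * R)) ^ 2 ^ N ≤ m / (16 * q) := calc
    (s / (32 * R)) ^ 2 ^ N ≤ ((m / (16 * q)) ^ β) ^ 2 ^ N := by gcongr
    _ = m / (16 * q) := by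
      rw [← Real.rpow_mul_natCast (by positivity), Nat.cast_pow, ← mul_pow]
      norm_num
  rw [le_div_iff₀ (by positivity)] at hpow
  rw [inv_mul_eq_div, le_div_iff₀ (by positivity)]
  linarith

end Generates

end Flows

section Thickening

theorem closedBall_subset_setOf_infDist_le {α : Type*} [PseudoMetricSpace α] {K : Set α} {x : α}
    {ρ a : ℝ} (h : infDist x K + ρ ≤ a) : closedBall x ρ ⊆ {z | infDist z K ≤ a} := fun z hz =>
  (infDist_le_infDist_add_dist (y := x)).trans (by linarith [mem_closedBall.1 hz])

variable {E : Type*} [NormedAddCommGroup E] {K : Set E}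

theorem setOf_infDist_le_eq_image_add (hK : IsCompact K) (hne : K.Nonempty) (ρ : ℝ) :
    {x | infDist x K ≤ ρ} = (fun p : E × E => p.1 + p.2) '' (K ×ˢ closedBall 0 ρ) := by
  ext x
  constructor
  · intro hx
    obtain ⟨k, hk, hdk⟩ := hK.exists_infDist_eq_dist hne x
    refine ⟨(k, x - k), ⟨hk, ?_⟩, add_sub_cancel k x⟩
    rw [mem_closedBall, dist_zero_right, ← dist_eq_norm, ← hdk]
    exact hx
  · rintro ⟨⟨k, b⟩, ⟨hk, hb⟩, rfl⟩
    refine (infDist_le_dist_of_mem hk).trans ?_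
    simpa [dist_eq_norm] using hb

theorem IsCompact.setOf_infDist_le [ProperSpace E] (hK : IsCompact K) (hne : K.Nonempty)
    (ρ : ℝ) : IsCompact {x | infDist x K ≤ ρ} := by
  rw [setOf_infDist_le_eq_image_add hK hne]
  exact (hK.prod (isCompact_closedBall 0 ρ)).image continuous_add

theorem IsConnected.setOf_infDist_le [NormedSpace ℝ E] (hK : IsCompact K) (hKc : IsConnected K)
    {ρ : ℝ} (hρ : 0 ≤ ρ) : IsConnected {x | infDist x K ≤ ρ} := by
  rw [setOf_infDist_le_eq_image_add hK hKc.nonempty]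
  exact (hKc.prod ⟨⟨0, mem_closedBall_self hρ⟩, (convex_closedBall 0 ρ).isPreconnected⟩).image _
    continuous_add.continuousOn

end Thickening

section SupNorm

variable {n : ℕ} {X : EuclideanSpace ℂ (Fin n) → EuclideanSpace ℂ (Fin n)}
  {S : Set (EuclideanSpace ℂ (Fin n))}

theorem norm_le_supNormOn_of_continuousOn {L : Set (EuclideanSpace ℂ (Fin n))}
    (hL : IsCompact L) (hSL : S ⊆ L) (hX : ContinuousOn X L) {z : EuclideanSpace ℂ (Fin n)}
    (hz : z ∈ S) : ‖X z‖ ≤ supNormOn X S := by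
  obtain ⟨c, hc⟩ := hL.exists_bound_of_continuousOn hX
  have hb : BddAbove (range fun w => ⨆ _ : w ∈ S, ‖X w‖) := by
    refine ⟨max c 0, forall_mem_range.2 fun w => ?_⟩
    by_cases hw : w ∈ S
    · rw [ciSup_pos hw]
      exact (hc w (hSL hw)).trans (le_max_left _ _)
    · have : IsEmpty (w ∈ S) := ⟨hw⟩
      rw [Real.iSup_of_isEmpty]
      exact le_max_right _ _
  calc ‖X z‖ = ⨆ _ : z ∈ S, ‖X z‖ := (ciSup_pos (f := fun _ => ‖X z‖) hz).symm
    _ ≤ supNormOn X S := le_ciSup hb z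

theorem supNormOn_le {c : ℝ} (hc : 0 ≤ c) (h : ∀ z ∈ S, ‖X z‖ ≤ c) : supNormOn X S ≤ c :=
  Real.iSup_le (fun z => Real.iSup_le (h z) hc) hc

end SupNorm

/-- Let `R > 2r > 2s > 0`, let `K` be a connected compact set containing `0`,
and let `D` be a domain with `B(0,2r) ⊆ D ⊆ B(0,R)` containing the closed `3s`-neighborhood
of `K`. Then there is a constant `C = C(K,R,s) > 0` (independent of `r`, `D` and `X`) such
that `‖X‖_K ≤ C·‖X‖_{B(0,r)}` for every holomorphic vector field `X` generated by a
one-parameter group action on `D`. -/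
theorem stmt3 {n : ℕ} (K : Set (EuclideanSpace ℂ (Fin n))) (hK : IsCompact K)
    (hKconn : IsConnected K) (h0K : (0 : EuclideanSpace ℂ (Fin n)) ∈ K)
    (R s : ℝ) (hs : 0 < s) :
    ∃ C : ℝ, 0 < C ∧
      ∀ r : ℝ, s < r → 2 * r < R →
        ∀ D : Set (EuclideanSpace ℂ (Fin n)), IsOpen D → IsConnected D →
          ball (0 : EuclideanSpace ℂ (Fin n)) (2 * r) ⊆ D →
          D ⊆ ball (0 : EuclideanSpace ℂ (Fin n)) R →
          {z : EuclideanSpace ℂ (Fin n) | Metric.infDist z K ≤ 3 * s} ⊆ D →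
          ∀ A : OneParamGroup n D, ∀ X : EuclideanSpace ℂ (Fin n) → EuclideanSpace ℂ (Fin n),
            Generates A X →
            supNormOn X K ≤ C * supNormOn X (ball 0 r) := by
  set T := {x : EuclideanSpace ℂ (Fin n) | infDist x K ≤ s / 2}
  have h0T : (0 : EuclideanSpace ℂ (Fin n)) ∈ T := by
    show infDist 0 K ≤ s / 2
    rw [infDist_zero_of_mem h0K]
    positivity
  obtain ⟨N, hN⟩ := exists_subset_chainReach (hK.setOf_infDist_le hKconn.nonempty (s / 2))
    (hKconn.setOf_infDist_le hK (by positivity)).isPreconnected h0T (by positivity : 0 < s / 64)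
  set C := (16 * (s / (32 * R)) ^ 2 ^ N)⁻¹
  -- `max 1` only matters for `R ≤ 0`, where `C` is not positive and the claim is vacuous.
  refine ⟨max 1 C, lt_max_of_lt_left one_pos, fun r hsr hrR D hD _ hball hDR h3s A X hX => ?_⟩
  have hnbhd : ∀ {x ρ}, infDist x K + ρ ≤ 3 * s → closedBall x ρ ⊆ D := fun h =>
    (closedBall_subset_setOf_infDist_le h).trans h3s
  have hm : ∀ z ∈ ball 0 r, ‖X z‖ ≤ supNormOn X (ball 0 r) := fun z =>
    norm_le_supNormOn_of_continuousOn (isCompact_closedBall 0 r) ball_subset_closedBall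
      (hX.1.continuousOn.mono ((closedBall_subset_ball (by linarith)).trans hball))
  have hm0 := (norm_nonneg _).trans (hm 0 (mem_ball_self (hs.trans hsr)))
  refine supNormOn_le (by positivity) fun ζ hζ => (hX.norm_le_of_chainReach hD hDR hs h0T
    (fun y hy => hnbhd (by linarith [show infDist y K ≤ s / 2 from hy])) hN
    (fun z hz => ⟨hnbhd ?_, hm z ?_⟩)
    (closedBall_subset_setOf_infDist_le (by rw [infDist_zero_of_mem hζ, zero_add]))).trans ?_
  · linarith [infDist_le_dist_of_mem (x := z) h0K, mem_closedBall.1 hz]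
  · exact mem_ball_zero_iff.2 (by linarith [mem_closedBall_zero_iff.1 hz])
  · gcongr
    exact le_max_right _ _
end

section
/- Let Π = {ζ ∈ ℂ : Im ζ > 0} be the upper half-plane and Λ = {ζ ∈ ℂ : 0 < Im ζ < 1}. If ψ is a holomorphic automorphism of Π such that ψ(Λ) = Λ, then there exists t ∈ ℝ such that ψ(ζ) = ζ + t for all ζ ∈ Π. -/
/-!
Translate `ψ` by a real number so that it fixes `I`; this is possible because `ψ` maps the line
`Im ζ = 1`, the part of `∂Λ` inside `Π`, into itself. Conjugated by the Cayley transform, the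
translated map becomes an automorphism of the unit disc fixing `0`, hence a rotation `w ↦ e * w`
by the Schwarz lemma. The line `Im ζ = 1` corresponds to the horocycle `|w - 1/2| = 1/2`, which
the rotation must preserve, so `e = 1`.
-/

open Set

/-- `f` is a holomorphic automorphism of the domain `Ω`: a bijective holomorphic
self-map of `Ω` with holomorphic inverse. -/
def IsBiholOn {E : Type*} [NormedAddCommGroup E] [NormedSpace ℂ E]
    (Ω : Set E) (f : E → E) : Prop :=
  DifferentiableOn ℂ f Ω ∧ BijOn f Ω Ω ∧
    ∃ g : E → E, DifferentiableOn ℂ g Ω ∧ InvOn g f Ω Ω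

/-- The upper half-plane `Π = {ζ : Im ζ > 0}`. -/
def upperHalfPlane' : Set ℂ := {ζ : ℂ | 0 < ζ.im}

/-- The strip `Λ = {ζ : 0 < Im ζ < 1}`. -/
def stripSet : Set ℂ := {ζ : ℂ | 0 < ζ.im ∧ ζ.im < 1}

open Complex Metric

noncomputable def cayley (z : ℂ) : ℂ := (z - I) / (z + I)

noncomputable def cayleyInv (w : ℂ) : ℂ := I * (1 + w) / (1 - w)

lemma add_I_ne_zero {z : ℂ} (hz : z ∈ upperHalfPlane') : z + I ≠ 0 := fun h => by
  have : z.im + 1 = 0 := by simpa using congrArg im h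
  linarith [show (0 : ℝ) < z.im from hz]

lemma one_sub_ne_zero_of_mem_ball {w : ℂ} (hw : w ∈ ball (0 : ℂ) 1) : 1 - w ≠ 0 := by
  intro h
  rw [sub_eq_zero] at h
  simp [← h] at hw

lemma mapsTo_cayley : MapsTo cayley upperHalfPlane' (ball 0 1) := by
  intro z hz
  have hz' : (0 : ℝ) < z.im := hz
  rw [mem_ball_zero_iff, cayley, norm_div, div_lt_one (norm_pos_iff.2 (add_I_ne_zero hz)),
    ← sq_lt_sq₀ (norm_nonneg _) (norm_nonneg _), Complex.sq_norm, Complex.sq_norm]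
  simp only [normSq_apply, sub_re, sub_im, add_re, add_im, I_re, I_im]
  nlinarith

lemma im_cayleyInv (w : ℂ) : (cayleyInv w).im = (1 - normSq w) / normSq (1 - w) := by
  simp only [cayleyInv, div_im, mul_re, mul_im, I_re, I_im, add_re, add_im, one_re, one_im,
    sub_re, sub_im, normSq_apply]
  ring

lemma mapsTo_cayleyInv : MapsTo cayleyInv (ball 0 1) upperHalfPlane' := by
  intro w hw
  have h1 : normSq w < 1 := by
    rw [← Complex.sq_norm, sq_lt_one_iff₀ (norm_nonneg _)]; simpa using hw
  show 0 < (cayleyInv w).im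
  rw [im_cayleyInv]
  exact div_pos (by linarith) (normSq_pos.2 (one_sub_ne_zero_of_mem_ball hw))

lemma cayleyInv_cayley {z : ℂ} (hz : z ∈ upperHalfPlane') : cayleyInv (cayley z) = z := by
  have h := add_I_ne_zero hz
  have h' : 1 - cayley z ≠ 0 := one_sub_ne_zero_of_mem_ball (mapsTo_cayley hz)
  rw [cayley] at h' ⊢
  rw [cayleyInv, div_eq_iff h']
  field_simp
  ring

lemma cayley_cayleyInv {w : ℂ} (hw : w ∈ ball (0 : ℂ) 1) : cayley (cayleyInv w) = w := by
  have h := one_sub_ne_zero_of_mem_ball hw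
  have h' : cayleyInv w + I ≠ 0 := add_I_ne_zero (mapsTo_cayleyInv hw)
  rw [cayleyInv] at h' ⊢
  rw [cayley, div_eq_iff h']
  field_simp
  ring

lemma differentiableOn_cayley : DifferentiableOn ℂ cayley upperHalfPlane' := fun _ hz =>
  ((differentiableAt_id.sub_const I).div (differentiableAt_id.add_const I)
    (add_I_ne_zero hz)).differentiableWithinAt

lemma differentiableOn_cayleyInv : DifferentiableOn ℂ cayleyInv (ball 0 1) := fun _ hw =>
  (((differentiableAt_const 1).add differentiableAt_id).const_mul I |>.div
    ((differentiableAt_const 1).sub differentiableAt_id)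
    (one_sub_ne_zero_of_mem_ball hw)).differentiableWithinAt

/-- The Schwarz lemma applied to `g` and to `h` gives `‖g w‖ = ‖w‖`; its equality case then
makes `g` linear. -/
theorem Complex.exists_eqOn_mul_of_leftInvOn_ball {g h : ℂ → ℂ}
    (hg : DifferentiableOn ℂ g (ball 0 1)) (hgm : MapsTo g (ball 0 1) (ball 0 1)) (hg0 : g 0 = 0)
    (hh : DifferentiableOn ℂ h (ball 0 1)) (hhm : MapsTo h (ball 0 1) (ball 0 1))
    (hhg : LeftInvOn h g (ball 0 1)) :
    ∃ e : ℂ, ‖e‖ = 1 ∧ EqOn g (e * ·) (ball 0 1) := by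
  have h0 : (0 : ℂ) ∈ ball (0 : ℂ) 1 := mem_ball_self one_pos
  have hh0 : h 0 = 0 := by simpa [hg0] using hhg h0
  have hnorm : ∀ w ∈ ball (0 : ℂ) 1, ‖g w‖ = ‖w‖ := by
    intro w hw
    have hw' : ‖w‖ < 1 := mem_ball_zero_iff.1 hw
    refine le_antisymm (norm_le_norm_of_mapsTo_ball hg (hgm.mono_right ball_subset_closedBall)
      hg0 hw') ?_
    calc ‖w‖ = ‖h (g w)‖ := by rw [hhg hw]
      _ ≤ ‖g w‖ := norm_le_norm_of_mapsTo_ball hh (hhm.mono_right ball_subset_closedBall) hh0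
          (mem_ball_zero_iff.1 (hgm hw))
  have hhalf : (2⁻¹ : ℂ) ∈ ball (0 : ℂ) 1 := by rw [mem_ball_zero_iff]; norm_num
  obtain ⟨e, he, hge⟩ := affine_of_mapsTo_ball_of_exists_norm_dslope_eq_div' hg
    (by rw [hg0]; exact hgm.mono_right ball_subset_closedBall)
    ⟨2⁻¹, hhalf, by
      rw [dslope_of_ne _ (by norm_num), slope_def_module, hg0, sub_zero, sub_zero, norm_smul,
        hnorm _ hhalf]
      norm_num⟩
  exact ⟨e, by simpa using he, fun w hw => by simpa [hg0, mul_comm] using hge hw⟩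

lemma isOpen_upperHalfPlane' : IsOpen upperHalfPlane' :=
  isOpen_lt continuous_const continuous_im

lemma closure_stripSet : closure stripSet = {ζ : ℂ | 0 ≤ ζ.im ∧ ζ.im ≤ 1} := by
  have : stripSet = univ ×ℂ Ioo 0 1 := by ext; simp [stripSet, reProdIm]
  rw [this, closure_reProdIm, closure_univ, closure_Ioo zero_ne_one]
  ext; simp [reProdIm]

/-- `ψ z` lies in `closure Λ` by continuity, and not in `Λ` by injectivity. -/
lemma im_eq_one_of_image_stripSet {ψ : ℂ → ℂ} (hc : ContinuousOn ψ upperHalfPlane')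
    (hmaps : MapsTo ψ upperHalfPlane' upperHalfPlane') (hinj : InjOn ψ upperHalfPlane')
    (hΛ : ψ '' stripSet = stripSet) {z : ℂ} (hz : z.im = 1) : (ψ z).im = 1 := by
  have hzH : z ∈ upperHalfPlane' := by simp [upperHalfPlane', hz]
  have hzΛ : z ∈ closure stripSet := by simp [closure_stripSet, hz]
  have hψzΛ : ψ z ∈ closure stripSet := by
    rw [← hΛ]
    exact (hc.continuousAt (isOpen_upperHalfPlane'.mem_nhds hzH)).continuousWithinAt
      |>.mem_closure_image hzΛ
  refine le_antisymm (by rw [closure_stripSet] at hψzΛ; exact hψzΛ.2) (not_lt.1 fun hlt => ?_)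
  obtain ⟨w, hw, hwz⟩ : ψ z ∈ ψ '' stripSet := by
    rw [hΛ]; exact ⟨hmaps hzH, hlt⟩
  obtain rfl := hinj hw.1 hzH hwz
  exact hw.2.ne hz

lemma IsBiholOn.sub_ofReal {ψ : ℂ → ℂ} (hψ : IsBiholOn upperHalfPlane' ψ) (q : ℝ) :
    IsBiholOn upperHalfPlane' (fun z => ψ z - q) := by
  obtain ⟨hd, hbij, g, hg, hinv⟩ := hψ
  have hshift {z : ℂ} (hz : z ∈ upperHalfPlane') : z + q ∈ upperHalfPlane' := by
    simpa [upperHalfPlane'] using hz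
  refine ⟨hd.sub_const _, ⟨fun z hz => ?_, fun z hz w hw h => hbij.injOn hz hw (by simpa using h),
    fun z hz => ?_⟩, fun z => g (z + q), hg.comp (differentiableOn_id.add_const _) @hshift,
    fun z hz => by simpa using hinv.1 hz, fun z hz => sub_eq_iff_eq_add.2 (hinv.2 (hshift hz))⟩
  · simpa [upperHalfPlane'] using hbij.mapsTo hz
  · obtain ⟨w, hw, hwz⟩ := hbij.surjOn (hshift hz)
    exact ⟨w, hw, by simp [hwz]⟩

theorem IsBiholOn.exists_eq_cayleyInv_mul_cayley {χ : ℂ → ℂ}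
    (hχ : IsBiholOn upperHalfPlane' χ) (hI : χ I = I) :
    ∃ e : ℂ, ‖e‖ = 1 ∧ ∀ z ∈ upperHalfPlane', χ z = cayleyInv (e * cayley z) := by
  obtain ⟨hd, hbij, χinv, hdinv, hinv⟩ := hχ
  have hmapsInv : MapsTo χinv upperHalfPlane' upperHalfPlane' := hinv.1.mapsTo hbij.surjOn
  obtain ⟨e, he, hrot⟩ := Complex.exists_eqOn_mul_of_leftInvOn_ball
    (g := cayley ∘ χ ∘ cayleyInv) (h := cayley ∘ χinv ∘ cayleyInv)
    (differentiableOn_cayley.comp (hd.comp differentiableOn_cayleyInv mapsTo_cayleyInv)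
      (hbij.mapsTo.comp mapsTo_cayleyInv))
    (mapsTo_cayley.comp (hbij.mapsTo.comp mapsTo_cayleyInv))
    (by simp [cayleyInv, hI, cayley])
    (differentiableOn_cayley.comp (hdinv.comp differentiableOn_cayleyInv mapsTo_cayleyInv)
      (hmapsInv.comp mapsTo_cayleyInv))
    (mapsTo_cayley.comp (hmapsInv.comp mapsTo_cayleyInv))
    (fun w hw => by
      simp only [Function.comp_apply]
      rw [cayleyInv_cayley (hbij.mapsTo (mapsTo_cayleyInv hw)), hinv.1 (mapsTo_cayleyInv hw),
        cayley_cayleyInv hw])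
  refine ⟨e, he, fun z hz => ?_⟩
  have := hrot (mapsTo_cayley hz)
  simp only [Function.comp_apply, cayleyInv_cayley hz] at this
  rw [← this, cayleyInv_cayley (hbij.mapsTo hz)]

lemma im_cayleyInv_eq_one_iff {w : ℂ} (hw : w ∈ ball (0 : ℂ) 1) :
    (cayleyInv w).im = 1 ↔ normSq w = w.re := by
  rw [im_cayleyInv, div_eq_one_iff_eq (normSq_pos.2 (one_sub_ne_zero_of_mem_ball hw)).ne']
  simp only [normSq_apply, sub_re, sub_im, one_re, one_im]
  constructor <;> intro h <;> linarith

lemma eq_one_of_im_cayleyInv_mul_cayley {e : ℂ} (he : ‖e‖ = 1)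
    (hline : ∀ z : ℂ, z.im = 1 → (cayleyInv (e * cayley z)).im = 1) : e = 1 := by
  have key : ∀ z : ℂ, z.im = 1 → ((e - 1) * cayley z).re = 0 := by
    intro z hz
    have hzH : z ∈ upperHalfPlane' := by simp [upperHalfPlane', hz]
    have hw := mapsTo_cayley hzH
    have hew : e * cayley z ∈ ball (0 : ℂ) 1 := by
      simpa [mem_ball_zero_iff, he] using hw
    have h1 := (im_cayleyInv_eq_one_iff hw).1 (by rw [cayleyInv_cayley hzH, hz])
    have h2 := (im_cayleyInv_eq_one_iff hew).1 (hline z hz)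
    rw [normSq_mul, ← Complex.sq_norm e, he, one_pow, one_mul, h1] at h2
    rw [sub_mul, one_mul, sub_re, h2, sub_self]
  have h1 : cayley (1 + I) = (1 - 2 * I) / 5 := by
    rw [cayley, div_eq_div_iff (add_I_ne_zero (by simp [upperHalfPlane'])) (by norm_num)]
    ring_nf; simp only [I_sq]; ring
  have h2 : cayley (-1 + I) = (1 + 2 * I) / 5 := by
    rw [cayley, div_eq_div_iff (add_I_ne_zero (by simp [upperHalfPlane'])) (by norm_num)]
    ring_nf; simp only [I_sq]; ring
  have k1 := key (1 + I) (by simp)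
  have k2 := key (-1 + I) (by simp)
  rw [h1] at k1
  rw [h2] at k2
  apply Complex.ext <;> simp [mul_re, mul_im] at k1 k2 ⊢ <;> linarith

/-- If `ψ` is a holomorphic automorphism of the upper half-plane `Π`
with `ψ(Λ) = Λ`, where `Λ = {0 < Im ζ < 1}`, then `ψ` is the translation `ζ ↦ ζ + t`
for some real `t`. -/
theorem stmt10 (ψ : ℂ → ℂ) (hψ : IsBiholOn upperHalfPlane' ψ)
    (hΛ : ψ '' stripSet = stripSet) :
    ∃ t : ℝ, ∀ ζ ∈ upperHalfPlane', ψ ζ = ζ + t := by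
  have hline : ∀ z : ℂ, z.im = 1 → (ψ z).im = 1 := fun z =>
    im_eq_one_of_image_stripSet hψ.1.continuousOn hψ.2.1.mapsTo hψ.2.1.injOn hΛ
  set t := (ψ I).re
  have hχI : ψ I - t = I := by
    apply Complex.ext <;> simp [t, hline I (by simp)]
  obtain ⟨e, he, hχ⟩ := (hψ.sub_ofReal t).exists_eq_cayleyInv_mul_cayley hχI
  have he1 : e = 1 := eq_one_of_im_cayleyInv_mul_cayley he fun z hz => by
    rw [← hχ z (by simp [upperHalfPlane', hz])]
    simpa using hline z hz
  refine ⟨t, fun ζ hζ => ?_⟩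
  rw [← sub_eq_iff_eq_add, hχ ζ hζ, he1, one_mul, cayleyInv_cayley hζ]
end

section
/- Let Q = {z ∈ Δ : |z − 1/2| > 1/2} and D = {(z, w) ∈ ℂ² : z ∈ Q, w ∈ Δ, w ≠ z}. Then every holomorphic automorphism F of D extends to a holomorphic automorphism F̂ of Q × Δ, i.e., there is a bijective holomorphic map F̂ : Q × Δ → Q × Δ with holomorphic inverse such that F̂ agrees with F on D. -/
open Set

/-- The unit disc `Δ ⊆ ℂ`. -/
def unitDisc : Set ℂ := {z : ℂ | ‖z‖ < 1}

/-- `Q = {z ∈ Δ : |z − 1/2| > 1/2}`. -/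
def Qset : Set ℂ := {z : ℂ | ‖z‖ < 1 ∧ 1 / 2 < ‖z - 1 / 2‖}

/-- `D = {(z,w) : z ∈ Q, w ∈ Δ, w ≠ z}`. -/
def Dset : Set (ℂ × ℂ) := {p : ℂ × ℂ | p.1 ∈ Qset ∧ ‖p.2‖ < 1 ∧ p.2 ≠ p.1}

/-!
`F` is bounded on `D`, and a bounded holomorphic function on `Ω ∖ {w = z}` extends holomorphically
to `Ω`. Substituting `w = z + u` turns the diagonal into `{u = 0}`: each slice extends
across `u = 0` by the one-variable removable singularity theorem, the value at `u = 0` is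
holomorphic in `z` as a uniform limit of holomorphic functions, and a bounded separately
holomorphic function is jointly holomorphic (Osgood).

The extension `F̂` maps `Q × Δ` into the closure of `D`. Since `F` is onto `D`, neither component
of `F̂` is constant, so the maximum principle for `F̂₁`, `(F̂₁ - 1/2)⁻¹` and `F̂₂` keeps `F̂` off
the boundary. Extending `F⁻¹` in the same way, `F̂⁻¹ ∘ F̂ = id` and `F̂ ∘ F̂⁻¹ = id` hold on the
dense set `D`, hence on `Q × Δ`.
-/
open Metric Filter Topology Function

lemma mapsTo_closedBall_two_mul {α F : Type*} [SeminormedAddCommGroup F] {f : α → F}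
    {s : Set α} {C : ℝ} (hC : ∀ x ∈ s, ‖f x‖ ≤ C) {c : α} (hc : c ∈ s) :
    MapsTo f s (closedBall (f c) (2 * C)) := fun x hx => by
  rw [mem_closedBall, dist_eq_norm]
  linarith [norm_sub_le (f x) (f c), hC x hx, hC c hc]

variable {E : Type*} [NormedAddCommGroup E]

section Holomorphic

variable [NormedSpace ℂ E]

namespace Complex

variable {f : ℂ → E} {c z : ℂ} {R C : ℝ}

lemma norm_sub_le_of_norm_le (hd : DifferentiableOn ℂ f (ball c R))
    (hC : ∀ x ∈ ball c R, ‖f x‖ ≤ C) (hz : z ∈ ball c R) :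
    ‖f z - f c‖ ≤ 2 * C / R * ‖z - c‖ := by
  simpa only [dist_eq_norm] using dist_le_div_mul_dist_of_mapsTo_ball hd
    (mapsTo_closedBall_two_mul hC (mem_ball_self (pos_of_mem_ball hz))) hz

lemma norm_deriv_le_of_norm_le (hd : DifferentiableOn ℂ f (ball c R))
    (hC : ∀ x ∈ ball c R, ‖f x‖ ≤ C) (hR : 0 < R) : ‖deriv f c‖ ≤ 2 * C / R :=
  norm_deriv_le_div_of_mapsTo_ball hd (mapsTo_closedBall_two_mul hC (mem_ball_self hR)) hR

lemma norm_sub_sub_smul_deriv_le_of_norm_le (hd : DifferentiableOn ℂ f (ball c R))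
    (hC : ∀ x ∈ ball c R, ‖f x‖ ≤ C) (hz : z ∈ ball c R) :
    ‖f z - f c - (z - c) • deriv f c‖ ≤ 4 * C * (‖z - c‖ / R) ^ 2 := by
  have hR : 0 < R := pos_of_mem_ball hz
  set g : ℂ → E := fun x => f x - f c - (x - c) • deriv f c
  have hgd : DifferentiableOn ℂ g (ball c R) := by fun_prop
  have hg : (g · - g c) =o[𝓝 c] (fun x => ‖x - c‖ ^ 1) := by
    simpa [g] using (hasDerivAt_iff_isLittleO.1
      (hd.differentiableAt (ball_mem_nhds c hR)).hasDerivAt).norm_right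
  have hmaps : MapsTo g (ball c R) (closedBall (g c) (4 * C)) := by
    intro x hx
    have hx' : ‖x - c‖ ≤ R := (mem_ball_iff_norm.1 hx).le
    have hderiv : ‖x - c‖ * ‖deriv f c‖ ≤ 2 * C := by
      calc ‖x - c‖ * ‖deriv f c‖ ≤ R * (2 * C / R) := by
            gcongr
            exact norm_deriv_le_of_norm_le hd hC hR
        _ = 2 * C := by field_simp
    rw [mem_closedBall, dist_eq_norm]
    calc ‖g x - g c‖ = ‖(f x - f c) - (x - c) • deriv f c‖ := by simp [g]
      _ ≤ ‖f x - f c‖ + ‖x - c‖ * ‖deriv f c‖ := by rw [← norm_smul]; exact norm_sub_le _ _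
      _ ≤ 4 * C := by linarith [norm_sub_le (f x) (f c), hC x hx, hC c (mem_ball_self hR)]
  simpa [g, dist_eq_norm] using dist_le_mul_div_pow_of_mapsTo_ball_of_isLittleO hgd hmaps hg hz

end Complex

section Osgood

variable {f : ℂ × ℂ → E} {a b : ℂ} {R C : ℝ}

lemma norm_deriv_sub_deriv_le_of_separately (hR : 0 < R)
    (h₁ : ∀ w ∈ ball b R, DifferentiableOn ℂ (fun z => f (z, w)) (ball a R))
    (h₂ : ∀ z ∈ ball a R, DifferentiableOn ℂ (fun w => f (z, w)) (ball b R))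
    (hC : ∀ z ∈ ball a R, ∀ w ∈ ball b R, ‖f (z, w)‖ ≤ C) {w : ℂ} (hw : w ∈ ball b R) :
    ‖deriv (fun z => f (z, w)) a - deriv (fun z => f (z, b)) a‖ ≤ 4 * C / R ^ 2 * ‖w - b‖ := by
  have hb : b ∈ ball b R := mem_ball_self hR
  have hslice : ∀ z ∈ ball a R, ‖f (z, w) - f (z, b)‖ ≤ 2 * C / R * ‖w - b‖ := fun z hz =>
    Complex.norm_sub_le_of_norm_le (h₂ z hz) (hC z hz) hw
  have hderiv := Complex.norm_deriv_le_of_norm_le ((h₁ w hw).sub (h₁ b hb)) hslice hR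
  have ha : ball a R ∈ 𝓝 a := ball_mem_nhds a hR
  rw [deriv_sub ((h₁ w hw).differentiableAt ha) ((h₁ b hb).differentiableAt ha)] at hderiv
  calc _ ≤ 2 * (2 * C / R * ‖w - b‖) / R := hderiv
    _ = 4 * C / R ^ 2 * ‖w - b‖ := by ring

/-- Osgood's lemma for bounded functions. The one-variable Schwarz-lemma estimates make
`f p - f (a, p.2) - (p.1 - a) • ∂₁f (a, b)` an `O(‖p - (a, b)‖²)`. -/
theorem differentiableAt_of_separately_of_norm_le (hR : 0 < R)
    (h₁ : ∀ w ∈ ball b R, DifferentiableOn ℂ (fun z => f (z, w)) (ball a R))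
    (h₂ : ∀ z ∈ ball a R, DifferentiableOn ℂ (fun w => f (z, w)) (ball b R))
    (hC : ∀ z ∈ ball a R, ∀ w ∈ ball b R, ‖f (z, w)‖ ≤ C) : DifferentiableAt ℂ f (a, b) := by
  set A := deriv (fun z => f (z, b)) a
  set ρ : ℂ × ℂ → E := fun p => f p - f (a, p.2) - (p.1 - a) • A
  have hρ : ∀ p ∈ ball (a, b) R, ‖ρ p‖ ≤ 8 * C / R ^ 2 * ‖p - (a, b)‖ ^ 2 := by
    rintro ⟨z, w⟩ hp
    rw [← ball_prod_same] at hp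
    obtain ⟨hz, hw⟩ : z ∈ ball a R ∧ w ∈ ball b R := hp
    set N := ‖(z, w) - (a, b)‖
    have hza : ‖z - a‖ ≤ N := norm_fst_le ((z, w) - (a, b))
    have hwb : ‖w - b‖ ≤ N := norm_snd_le ((z, w) - (a, b))
    have hC0 : 0 ≤ C := (norm_nonneg _).trans (hC z hz w hw)
    have htaylor := Complex.norm_sub_sub_smul_deriv_le_of_norm_le (h₁ w hw) (fun x hx => hC x hx w hw) hz
    have hpartial := norm_deriv_sub_deriv_le_of_separately hR h₁ h₂ hC hw
    have hsplit : ρ (z, w) = (f (z, w) - f (a, w) - (z - a) • deriv (fun z => f (z, w)) a) +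
        (z - a) • (deriv (fun z => f (z, w)) a - A) := by
      simp only [ρ, smul_sub]; abel
    calc ‖ρ (z, w)‖ ≤ 4 * C * (‖z - a‖ / R) ^ 2 +
          ‖z - a‖ * (4 * C / R ^ 2 * ‖w - b‖) := by
          rw [hsplit]
          refine (norm_add_le _ _).trans (add_le_add htaylor ?_)
          rw [norm_smul]
          gcongr
      _ ≤ 4 * C * (N / R) ^ 2 + N * (4 * C / R ^ 2 * N) := by gcongr
      _ = 8 * C / R ^ 2 * N ^ 2 := by ring
  have hρ' : HasFDerivAt ρ (0 : ℂ × ℂ →L[ℂ] E) (a, b) := by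
    refine Asymptotics.IsBigO.hasFDerivAt (n := 2) ?_ one_lt_two
    refine Asymptotics.IsBigO.of_bound (8 * C / R ^ 2) ?_
    filter_upwards [ball_mem_nhds (a, b) hR] with p hp
    simpa using hρ p hp
  have hfa : DifferentiableAt ℂ (fun p : ℂ × ℂ => f (a, p.2)) (a, b) :=
    ((h₂ a (mem_ball_self hR)).differentiableAt (ball_mem_nhds b hR)).comp (f := Prod.snd) (a, b)
      (by fun_prop)
  have hf : f = fun p => ρ p + f (a, p.2) + (p.1 - a) • A := by
    funext p; simp only [ρ]; abel
  rw [hf]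
  exact (hρ'.differentiableAt.add hfa).add (by fun_prop)

theorem differentiableOn_of_separately_of_norm_le {U : Set (ℂ × ℂ)} (hU : IsOpen U)
    (h₁ : ∀ p ∈ U, DifferentiableAt ℂ (fun z => f (z, p.2)) p.1)
    (h₂ : ∀ p ∈ U, DifferentiableAt ℂ (fun w => f (p.1, w)) p.2)
    (hC : ∀ p ∈ U, ‖f p‖ ≤ C) : DifferentiableOn ℂ f U := by
  rintro ⟨a, b⟩ hp
  obtain ⟨R, hR, hball⟩ := Metric.isOpen_iff.1 hU _ hp
  rw [← ball_prod_same] at hball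
  have hmem : ∀ z ∈ ball a R, ∀ w ∈ ball b R, (z, w) ∈ U := fun z hz w hw => hball ⟨hz, hw⟩
  exact (differentiableAt_of_separately_of_norm_le hR
    (fun w hw z hz => (h₁ _ (hmem z hz w hw)).differentiableWithinAt)
    (fun z hz w hw => (h₂ _ (hmem z hz w hw)).differentiableWithinAt)
    (fun z hz w hw => hC _ (hmem z hz w hw))).differentiableWithinAt

end Osgood

end Holomorphic

noncomputable def extendAcrossSndZero (k : ℂ × ℂ → E) (p : ℂ × ℂ) : E :=
  update (fun u => k (p.1, u)) 0 (limUnder (𝓝[≠] 0) fun u => k (p.1, u)) p.2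

section ExtendAcrossSndZero

variable {k : ℂ × ℂ → E} {W : Set (ℂ × ℂ)} {C : ℝ}

lemma extendAcrossSndZero_of_snd_ne {p : ℂ × ℂ} (hp : p.2 ≠ 0) :
    extendAcrossSndZero k p = k p :=
  update_of_ne hp _ _

lemma extendAcrossSndZero_eventuallyEq {p : ℂ × ℂ} (hp : p.2 ≠ 0) :
    extendAcrossSndZero k =ᶠ[𝓝 p] k := by
  filter_upwards [(isOpen_ne_fun continuous_snd continuous_const).mem_nhds hp] with q hq
  exact extendAcrossSndZero_of_snd_ne hq

variable [NormedSpace ℂ E] (hW : IsOpen W) (hk : DifferentiableOn ℂ k (W ∩ {p | p.2 ≠ 0}))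
include hW hk

lemma differentiableAt_extendAcrossSndZero_of_snd_ne {p : ℂ × ℂ} (hpW : p ∈ W) (hp : p.2 ≠ 0) :
    DifferentiableAt ℂ (extendAcrossSndZero k) p :=
  ((hk.differentiableAt ((hW.inter (isOpen_ne_fun continuous_snd continuous_const)).mem_nhds
    ⟨hpW, hp⟩)).congr_of_eventuallyEq (extendAcrossSndZero_eventuallyEq hp))

variable [CompleteSpace E] (hC : ∀ p ∈ W ∩ {p | p.2 ≠ 0}, ‖k p‖ ≤ C)
include hC

lemma differentiableOn_extendAcrossSndZero_slice {z : ℂ} (hz : (z, 0) ∈ W) :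
    DifferentiableOn ℂ (fun u => extendAcrossSndZero k (z, u)) {u | (z, u) ∈ W} := by
  have hS : IsOpen {u | (z, u) ∈ W} := hW.preimage (by fun_prop)
  refine Complex.differentiableOn_update_limUnder_of_bddAbove (hS.mem_nhds hz) ?_ ⟨C, ?_⟩
  · rintro u ⟨hu, hu0⟩
    exact ((hk.differentiableAt ((hW.inter (isOpen_ne_fun continuous_snd continuous_const)).mem_nhds
      ⟨hu, hu0⟩)).comp (f := fun u => (z, u)) u (by fun_prop)).differentiableWithinAt
  · rintro _ ⟨u, ⟨hu, hu0⟩, rfl⟩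
    exact hC (z, u) ⟨hu, hu0⟩

lemma norm_extendAcrossSndZero_le {p : ℂ × ℂ} (hp : p ∈ W) : ‖extendAcrossSndZero k p‖ ≤ C := by
  obtain ⟨z, u⟩ := p
  rcases eq_or_ne u 0 with rfl | hu
  · have hS : {u | (z, u) ∈ W} ∈ 𝓝 (0 : ℂ) := (hW.preimage (by fun_prop)).mem_nhds hp
    have hcont : ContinuousAt (fun u => extendAcrossSndZero k (z, u)) 0 :=
      ((differentiableOn_extendAcrossSndZero_slice hW hk hC hp).differentiableAt hS).continuousAt
    refine le_of_tendsto (hcont.continuousWithinAt (s := {0}ᶜ)).tendsto.norm ?_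
    filter_upwards [self_mem_nhdsWithin, nhdsWithin_le_nhds hS] with v hv0 hvW
    rw [extendAcrossSndZero_of_snd_ne (p := (z, v)) hv0]
    exact hC _ ⟨hvW, hv0⟩
  · rw [extendAcrossSndZero_of_snd_ne hu]
    exact hC _ ⟨hp, hu⟩

/-- `z ↦ extendAcrossSndZero k (z, 0)` is the uniform limit of the holomorphic functions
`z ↦ k (z, u)` as `u → 0`, by the Schwarz lemma in `u`. -/
lemma differentiableAt_extendAcrossSndZero_fst {z₀ : ℂ} (hz₀ : (z₀, 0) ∈ W) :
    DifferentiableAt ℂ (fun z => extendAcrossSndZero k (z, 0)) z₀ := by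
  obtain ⟨r, hr, hball⟩ := Metric.isOpen_iff.1 hW _ hz₀
  rw [← ball_prod_same] at hball
  have hmem : ∀ z ∈ ball z₀ r, ∀ u ∈ ball (0 : ℂ) r, (z, u) ∈ W := fun z hz u hu => hball ⟨hz, hu⟩
  have hlip : ∀ z ∈ ball z₀ r, ∀ u ∈ ball (0 : ℂ) r,
      ‖extendAcrossSndZero k (z, u) - extendAcrossSndZero k (z, 0)‖ ≤ 2 * C / r * ‖u‖ := by
    intro z hz u hu
    simpa using Complex.norm_sub_le_of_norm_le
      ((differentiableOn_extendAcrossSndZero_slice hW hk hC (hmem z hz 0 (mem_ball_self hr))).mono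
        fun v hv => hmem z hz v hv)
      (fun v hv => norm_extendAcrossSndZero_le hW hk hC (hmem z hz v hv)) hu
  have hunif : TendstoUniformlyOn (fun u z => extendAcrossSndZero k (z, u))
      (fun z => extendAcrossSndZero k (z, 0)) (𝓝[≠] 0) (ball z₀ r) := by
    rw [Metric.tendstoUniformlyOn_iff]
    intro ε hε
    have hsmall : ∀ᶠ u : ℂ in 𝓝 0, 2 * C / r * ‖u‖ < ε := by
      have : Tendsto (fun u : ℂ => 2 * C / r * ‖u‖) (𝓝 0) (𝓝 0) := by
        simpa using (tendsto_norm_zero (E := ℂ)).const_mul (2 * C / r)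
      exact this.eventually (gt_mem_nhds hε)
    filter_upwards [nhdsWithin_le_nhds hsmall, nhdsWithin_le_nhds (ball_mem_nhds 0 hr)]
      with u hu hur z hz
    rw [dist_comm, dist_eq_norm]
    exact (hlip z hz u hur).trans_lt hu
  have hdiff : ∀ᶠ u in 𝓝[≠] (0 : ℂ),
      DifferentiableOn ℂ (fun z => extendAcrossSndZero k (z, u)) (ball z₀ r) := by
    filter_upwards [self_mem_nhdsWithin, nhdsWithin_le_nhds (ball_mem_nhds 0 hr)] with u hu0 hur
    intro z hz
    exact ((differentiableAt_extendAcrossSndZero_of_snd_ne hW hk (hmem z hz u hur) hu0).comp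
      (f := fun z => (z, u)) z (by fun_prop)).differentiableWithinAt
  exact (hunif.tendstoLocallyUniformlyOn.differentiableOn hdiff isOpen_ball).differentiableAt
    (ball_mem_nhds z₀ hr)

theorem differentiableOn_extendAcrossSndZero : DifferentiableOn ℂ (extendAcrossSndZero k) W := by
  refine differentiableOn_of_separately_of_norm_le hW (fun p hp => ?_) (fun p hp => ?_)
    (fun p hp => norm_extendAcrossSndZero_le hW hk hC hp)
  · rcases eq_or_ne p.2 0 with hp0 | hp0
    · rw [hp0]
      exact differentiableAt_extendAcrossSndZero_fst hW hk hC (hp0 ▸ hp)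
    · exact (differentiableAt_extendAcrossSndZero_of_snd_ne hW hk hp hp0).comp
        (f := fun z => (z, p.2)) p.1 (by fun_prop)
  · rcases eq_or_ne p.2 0 with hp0 | hp0
    · have hS : {u | (p.1, u) ∈ W} ∈ 𝓝 p.2 := (hW.preimage (by fun_prop)).mem_nhds hp
      exact (differentiableOn_extendAcrossSndZero_slice hW hk hC (hp0 ▸ hp)).differentiableAt hS
    · exact (differentiableAt_extendAcrossSndZero_of_snd_ne hW hk hp hp0).comp
        (f := fun w => (p.1, w)) p.2 (by fun_prop)

end ExtendAcrossSndZero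

theorem exists_differentiableOn_eqOn_of_norm_le_off_diagonal [NormedSpace ℂ E] [CompleteSpace E]
    {Ω : Set (ℂ × ℂ)} {h : ℂ × ℂ → E} {C : ℝ} (hΩ : IsOpen Ω)
    (hd : DifferentiableOn ℂ h (Ω ∩ {p | p.2 ≠ p.1}))
    (hC : ∀ p ∈ Ω ∩ {p | p.2 ≠ p.1}, ‖h p‖ ≤ C) :
    ∃ g : ℂ × ℂ → E, DifferentiableOn ℂ g Ω ∧ EqOn g h (Ω ∩ {p | p.2 ≠ p.1}) := by
  set unshear : ℂ × ℂ → ℂ × ℂ := fun q => (q.1, q.1 + q.2)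
  set shear : ℂ × ℂ → ℂ × ℂ := fun p => (p.1, p.2 - p.1)
  have hW : IsOpen (unshear ⁻¹' Ω) := hΩ.preimage (by fun_prop)
  have hmaps : MapsTo unshear (unshear ⁻¹' Ω ∩ {q | q.2 ≠ 0}) (Ω ∩ {p | p.2 ≠ p.1}) :=
    fun q ⟨hq, hq0⟩ => ⟨hq, by simpa [unshear] using hq0⟩
  refine ⟨extendAcrossSndZero (h ∘ unshear) ∘ shear, ?_, ?_⟩
  · refine (differentiableOn_extendAcrossSndZero hW (hd.comp (by fun_prop) hmaps)
      (fun q hq => hC _ (hmaps hq))).comp (by fun_prop) fun p hp => ?_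
    simpa [shear, unshear] using hp
  · rintro p ⟨-, hp⟩
    simp [shear, unshear, extendAcrossSndZero_of_snd_ne (p := shear p) (sub_ne_zero.2 hp)]

lemma Set.MapsTo.closure_of_eqOn {X Y : Type*} [TopologicalSpace X] [TopologicalSpace Y]
    {s t : Set X} {u : Set Y} {f f' : X → Y} (hfs : MapsTo f s u) (hf : EqOn f' f s)
    (hf' : ContinuousOn f' t) (hst : s ⊆ t) (hts : t ⊆ closure s) : MapsTo f' t (closure u) :=
  fun x hx => closure_mono (s := f' '' s) (by rintro _ ⟨y, hy, rfl⟩; exact hf hy ▸ hfs hy)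
    (((hf' x hx).mono hst).mem_closure_image (hts hx))

lemma Set.LeftInvOn.of_subset_closure {X : Type*} [TopologicalSpace X] [T2Space X]
    {s t : Set X} {f g f' g' : X → X} (hinv : LeftInvOn g f s) (hfs : MapsTo f s s)
    (hf : EqOn f' f s) (hg : EqOn g' g s) (hf' : ContinuousOn f' t) (hg' : ContinuousOn g' t)
    (hmaps : MapsTo f' t t) (hst : s ⊆ t) (hts : t ⊆ closure s) : LeftInvOn g' f' t :=
  EqOn.of_subset_closure (fun x hx => by simp [hf hx, hg (hfs hx), hinv hx])
    (hg'.comp hf' hmaps) continuousOn_id hst hts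

section MaximumPrinciple

variable [NormedSpace ℂ E] {Ω : Set E} (hΩ : IsPreconnected Ω) (hΩo : IsOpen Ω)
include hΩ hΩo

lemma mapsTo_ball_of_mapsTo_closedBall {F : Type*} [NormedAddCommGroup F] [NormedSpace ℂ F]
    [StrictConvexSpace ℝ F] {G : E → F} {c : F} {r : ℝ} (hG : DifferentiableOn ℂ G Ω)
    (hmaps : MapsTo G Ω (closedBall c r)) (hnc : ∃ x ∈ Ω, ∃ y ∈ Ω, G x ≠ G y) :
    MapsTo G Ω (ball c r) := by
  intro p hp
  by_contra hpr
  have hmax : IsMaxOn (norm ∘ (G · - c)) Ω p := fun q hq => by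
    have hq' := hmaps hq
    rw [mem_closedBall, dist_eq_norm] at hq'
    rw [mem_ball, dist_eq_norm, not_lt] at hpr
    exact hq'.trans hpr
  have hconst := Complex.eqOn_of_isPreconnected_of_isMaxOn_norm hΩ hΩo (hG.sub_const c) hp hmax
  obtain ⟨x, hx, y, hy, hxy⟩ := hnc
  exact hxy (sub_left_inj.1 ((hconst hx).trans (hconst hy).symm))

lemma mapsTo_compl_closedBall_of_mapsTo_compl_ball {G : E → ℂ} {c : ℂ} {r : ℝ} (hr : 0 < r)
    (hG : DifferentiableOn ℂ G Ω) (hmaps : MapsTo G Ω (ball c r)ᶜ)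
    (hnc : ∃ x ∈ Ω, ∃ y ∈ Ω, G x ≠ G y) : MapsTo G Ω (closedBall c r)ᶜ := by
  have hfar : ∀ x ∈ Ω, r ≤ ‖G x - c‖ := fun x hx => by simpa [dist_eq_norm] using hmaps hx
  have hne : ∀ x ∈ Ω, G x - c ≠ 0 := fun x hx => norm_pos_iff.1 (hr.trans_le (hfar x hx))
  have hinv : MapsTo (fun x => (G x - c)⁻¹) Ω (ball 0 r⁻¹) := by
    refine mapsTo_ball_of_mapsTo_closedBall hΩ hΩo ((hG.sub_const c).inv hne)
      (fun x hx => by simpa using inv_anti₀ hr (hfar x hx)) ?_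
    obtain ⟨x, hx, y, hy, hxy⟩ := hnc
    exact ⟨x, hx, y, hy, by simpa using hxy⟩
  intro p hp
  have hp' := hinv hp
  simp only [mem_ball, dist_zero_right, norm_inv] at hp'
  simpa [dist_eq_norm] using (inv_lt_inv₀ (norm_pos_iff.2 (hne p hp)) hr).1 hp'

end MaximumPrinciple

open Complex

lemma unitDisc_eq_ball : unitDisc = ball 0 1 := by
  ext z; simp [unitDisc]

lemma Qset_eq : Qset = ball 0 1 ∩ (closedBall (1 / 2) (1 / 2))ᶜ := by
  ext z; simp [Qset, dist_eq_norm]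

lemma isOpen_Qset : IsOpen Qset := by
  rw [Qset_eq]; exact isOpen_ball.inter isClosed_closedBall.isOpen_compl

lemma mem_Qset_iff_normSq {z : ℂ} : z ∈ Qset ↔ normSq z < 1 ∧ z.re < normSq z := by
  have h₁ : ‖z‖ < 1 ↔ normSq z < 1 := by
    rw [← Complex.sq_norm, ← sq_lt_sq₀ (norm_nonneg z) zero_le_one, one_pow]
  have h₂ : 1 / 2 < ‖z - 1 / 2‖ ↔ z.re < normSq z := by
    rw [← sq_lt_sq₀ (by norm_num) (norm_nonneg _), Complex.sq_norm, normSq_apply, normSq_apply]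
    simp only [sub_re, sub_im, div_ofNat_re, div_ofNat_im, one_re, one_im]
    constructor <;> intro h <;> nlinarith
  simp only [Qset, mem_ofPred_eq, h₁, h₂]

lemma Qset_eq_image_strip :
    Qset = (fun w : ℂ => 1 - w⁻¹) '' {w | 1 / 2 < w.re ∧ w.re < 1} := by
  -- `w ↦ 1 - w⁻¹` and `z ↦ (1 - z)⁻¹` are inverse on all of `ℂ`, thanks to `0⁻¹ = 0`.
  rw [image_eq_preimage_of_inverse (g := fun z : ℂ => (1 - z)⁻¹) (fun w => by simp)
    (fun z => by simp)]
  ext z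
  rw [mem_Qset_iff_normSq, mem_preimage, mem_ofPred_eq, inv_re]
  have hN : normSq (1 - z) = 1 - 2 * z.re + normSq z := by
    simp only [normSq_apply, sub_re, sub_im, one_re, one_im]; ring
  rcases eq_or_ne z 1 with rfl | hz
  · norm_num
  have hpos : 0 < normSq (1 - z) := normSq_pos.2 (sub_ne_zero.2 hz.symm)
  rw [lt_div_iff₀ hpos, div_lt_one hpos, hN]
  simp only [sub_re, one_re]
  constructor <;> rintro ⟨h₁, h₂⟩ <;> constructor <;> linarith

lemma isPreconnected_Qset : IsPreconnected Qset := by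
  rw [Qset_eq_image_strip]
  refine ((convex_halfSpace_re_gt _).inter (convex_halfSpace_re_lt _)).isPreconnected.image _
    (continuousOn_const.sub (continuousOn_inv₀.mono ?_))
  rintro w ⟨hw, -⟩ rfl
  norm_num at hw

lemma isOpen_Qset_prod_unitDisc : IsOpen (Qset ×ˢ unitDisc) := by
  rw [unitDisc_eq_ball]; exact isOpen_Qset.prod isOpen_ball

lemma isPreconnected_Qset_prod_unitDisc : IsPreconnected (Qset ×ˢ unitDisc) := by
  rw [unitDisc_eq_ball]; exact isPreconnected_Qset.prod (convex_ball 0 1).isPreconnected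

lemma Dset_eq_inter : Dset = Qset ×ˢ unitDisc ∩ {p | p.2 ≠ p.1} := by
  ext p; simp [Dset, unitDisc, and_assoc]

lemma Dset_subset : Dset ⊆ Qset ×ˢ unitDisc := fun _ hp => ⟨hp.1, hp.2.1⟩

lemma dense_snd_ne_fst : Dense {p : ℂ × ℂ | p.2 ≠ p.1} := by
  have : {p : ℂ × ℂ | p.2 ≠ p.1} =
      (ContinuousLinearMap.snd ℂ ℂ ℂ - ContinuousLinearMap.fst ℂ ℂ ℂ) ⁻¹' {0}ᶜ := by
    ext p; simp [sub_eq_zero]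
  rw [this]
  exact (dense_compl_singleton 0).preimage
    (ContinuousLinearMap.isOpenMap _ fun x => ⟨(0, x), by simp⟩)

lemma subset_closure_Dset : Qset ×ˢ unitDisc ⊆ closure Dset := by
  rw [Dset_eq_inter]
  exact dense_snd_ne_fst.open_subset_closure_inter isOpen_Qset_prod_unitDisc

lemma closure_Dset_subset :
    closure Dset ⊆ (closedBall 0 1 ∩ (ball (1 / 2) (1 / 2))ᶜ) ×ˢ closedBall 0 1 := by
  refine closure_minimal (fun p hp => ?_)
    ((isClosed_closedBall.inter isOpen_ball.isClosed_compl).prod isClosed_closedBall)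
  rw [Dset_eq_inter, Qset_eq, unitDisc_eq_ball] at hp
  obtain ⟨⟨⟨h₁, h₂⟩, h₃⟩, -⟩ := hp
  exact ⟨⟨ball_subset_closedBall h₁, fun h => h₂ (ball_subset_closedBall h)⟩,
    ball_subset_closedBall h₃⟩

lemma exists_mem_Dset_fst_ne_snd_ne :
    ∃ d₁ ∈ Dset, ∃ d₂ ∈ Dset, d₁.1 ≠ d₂.1 ∧ d₁.2 ≠ d₂.2 := by
  refine ⟨(-1 / 2, 0), ?_, (-1 / 4, 1 / 2), ?_, by norm_num, by norm_num⟩ <;>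
    norm_num [Dset, Qset]

lemma exists_extension_of_bijOn {F : ℂ × ℂ → ℂ × ℂ} (hd : DifferentiableOn ℂ F Dset)
    (hF : BijOn F Dset Dset) :
    ∃ Fh : ℂ × ℂ → ℂ × ℂ, DifferentiableOn ℂ Fh (Qset ×ˢ unitDisc) ∧ EqOn Fh F Dset ∧
      MapsTo Fh (Qset ×ˢ unitDisc) (Qset ×ˢ unitDisc) := by
  have hbound : ∀ p ∈ Dset, ‖F p‖ ≤ 1 := fun p hp =>
    norm_prod_le_iff.2 ⟨(hF.mapsTo hp).1.1.le, (hF.mapsTo hp).2.1.le⟩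
  rw [Dset_eq_inter] at hd hbound
  obtain ⟨Fh, hFhd, hFh⟩ :=
    exists_differentiableOn_eqOn_of_norm_le_off_diagonal isOpen_Qset_prod_unitDisc hd hbound
  rw [← Dset_eq_inter] at hFh
  have hclosure := (hF.mapsTo.closure_of_eqOn hFh hFhd.continuousOn Dset_subset
    subset_closure_Dset).mono_right closure_Dset_subset
  obtain ⟨d₁, hd₁, d₂, hd₂, hne₁, hne₂⟩ := exists_mem_Dset_fst_ne_snd_ne
  obtain ⟨x, hx, rfl⟩ := hF.surjOn hd₁
  obtain ⟨y, hy, rfl⟩ := hF.surjOn hd₂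
  have hnc₁ : ∃ x ∈ Qset ×ˢ unitDisc, ∃ y ∈ Qset ×ˢ unitDisc, (Fh x).1 ≠ (Fh y).1 :=
    ⟨x, Dset_subset hx, y, Dset_subset hy, by rwa [hFh hx, hFh hy]⟩
  have hnc₂ : ∃ x ∈ Qset ×ˢ unitDisc, ∃ y ∈ Qset ×ˢ unitDisc, (Fh x).2 ≠ (Fh y).2 :=
    ⟨x, Dset_subset hx, y, Dset_subset hy, by rwa [hFh hx, hFh hy]⟩
  have h₁ := mapsTo_ball_of_mapsTo_closedBall isPreconnected_Qset_prod_unitDisc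
    isOpen_Qset_prod_unitDisc hFhd.fst (fun p hp => (hclosure hp).1.1) hnc₁
  have h₁' := mapsTo_compl_closedBall_of_mapsTo_compl_ball isPreconnected_Qset_prod_unitDisc
    isOpen_Qset_prod_unitDisc (by norm_num) hFhd.fst (fun p hp => (hclosure hp).1.2) hnc₁
  have h₂ := mapsTo_ball_of_mapsTo_closedBall isPreconnected_Qset_prod_unitDisc
    isOpen_Qset_prod_unitDisc hFhd.snd (fun p hp => (hclosure hp).2) hnc₂
  refine ⟨Fh, hFhd, hFh, fun p hp => ⟨?_, ?_⟩⟩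
  · rw [Qset_eq]; exact ⟨h₁ hp, h₁' hp⟩
  · rw [unitDisc_eq_ball]; exact h₂ hp

/-- Every holomorphic automorphism `F` of
`D = {(z,w) : z ∈ Q, w ∈ Δ, w ≠ z}` extends to a holomorphic automorphism of `Q × Δ`. -/
theorem stmt11 (F : ℂ × ℂ → ℂ × ℂ) (hF : IsBiholOn Dset F) :
    ∃ Fhat : ℂ × ℂ → ℂ × ℂ, IsBiholOn (Qset ×ˢ unitDisc) Fhat ∧
      ∀ p ∈ Dset, Fhat p = F p := by
  obtain ⟨hdF, hF, G, hdG, hinv⟩ := hF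
  have hG : BijOn G Dset Dset := hF.symm hinv.symm
  obtain ⟨Fh, hFhd, hFh, hFhm⟩ := exists_extension_of_bijOn hdF hF
  obtain ⟨Gh, hGhd, hGh, hGhm⟩ := exists_extension_of_bijOn hdG hG
  have hleft : LeftInvOn Gh Fh (Qset ×ˢ unitDisc) :=
    hinv.1.of_subset_closure hF.mapsTo hFh hGh hFhd.continuousOn hGhd.continuousOn hFhm
      Dset_subset subset_closure_Dset
  have hright : LeftInvOn Fh Gh (Qset ×ˢ unitDisc) :=
    hinv.2.of_subset_closure hG.mapsTo hGh hFh hGhd.continuousOn hFhd.continuousOn hGhm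
      Dset_subset subset_closure_Dset
  exact ⟨Fh, ⟨hFhd, InvOn.bijOn ⟨hleft, hright⟩ hFhm hGhm, Gh, hGhd, hleft, hright⟩,
    fun p hp => hFh hp⟩
end
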